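/- arXiv:1611.04420 — 6 statements merged into one kernel-verified Lean document; each statement's English description precedes it below -/
import Mathlib

section
/- Let d ≥ 1. For arbitrary points x, y ∈ S^d, ∫_{−1}^{1} σ( C(x,t) ∩ C(y,t) ) dt = 1 − C_d ‖x − y‖, where ‖·‖ is the Euclidean norm in ℝ^{d+1}. -/
open MeasureTheory Metric Set
open scoped RealInnerProductSpace ENNReal

noncomputable section

/-- The unit sphere `S^d` in `ℝ^(d+1)`, realized as `EuclideanSpace ℝ (Fin (d+1))`. -/
abbrev Sphere (d : ℕ) : Type _ := Metric.sphere (0 : EuclideanSpace ℝ (Fin (d + 1))) 1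

/-- The uniform probability measure `σ` on `S^d` (the normalized surface measure):
the normalization of the cone (surface) measure associated to the Lebesgue measure. -/
def sphereMeasure (d : ℕ) : Measure (Sphere d) :=
  ((volume : Measure (EuclideanSpace ℝ (Fin (d + 1)))).toSphere univ)⁻¹ •
    (volume : Measure (EuclideanSpace ℝ (Fin (d + 1)))).toSphere

/-- Euclidean inner product `x · y` of two points on the sphere. -/
def ip {d : ℕ} (x y : Sphere d) : ℝ :=
  ⟪(x : EuclideanSpace ℝ (Fin (d + 1))), (y : EuclideanSpace ℝ (Fin (d + 1)))⟫

/-- Euclidean distance `‖x - y‖` between two points on the sphere. -/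
def eucl {d : ℕ} (x y : Sphere d) : ℝ :=
  ‖(x : EuclideanSpace ℝ (Fin (d + 1))) - (y : EuclideanSpace ℝ (Fin (d + 1)))‖

/-- The normalized geodesic distance `d(x,y) = arccos(x·y)/π` on the sphere. -/
def geo {d : ℕ} (x y : Sphere d) : ℝ := Real.arccos (ip x y) / Real.pi

/-- The open spherical cap `C(x,t) = {z ∈ S^d : z · x > t}`. -/
def cap {d : ℕ} (x : Sphere d) (t : ℝ) : Set (Sphere d) := {z | t < ip x z}

/-- The open hemisphere `H(x) = {z ∈ S^d : z · x > 0}`. -/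
def hemi {d : ℕ} (x : Sphere d) : Set (Sphere d) := {z | 0 < ip x z}

/-! A point `z` lies in `C(x,t) ∩ C(y,t)` iff `t < min (x·z) (y·z)`, so by the layer-cake formula
the left-hand side is `∫ (min (x·z) (y·z) + 1) dσ`. Writing `min a b = (a + b - |a - b|) / 2`, the
linear terms integrate to zero by the symmetry `z ↦ -z`, and
`∫ |(x - y)·z| dσ = ‖x - y‖ ∫ |p·z| dσ` because `σ` is invariant under the orthogonal group, which
acts transitively on the sphere. -/

open scoped Pointwise

section SphereIsometry

variable {E : Type*} [NormedAddCommGroup E] [NormedSpace ℝ E]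

lemma LinearIsometryEquiv.smul_preimage_eq_preimage_smul (e : E ≃ₗᵢ[ℝ] E) (A : Set ℝ) (S : Set E) :
    A • e ⁻¹' S = e ⁻¹' (A • S) := by
  ext z
  simp only [mem_preimage, mem_smul]
  constructor
  · rintro ⟨c, hc, u, hu, rfl⟩
    exact ⟨c, hc, e u, hu, (e.map_smul c u).symm⟩
  · rintro ⟨c, hc, u, hu, hcu⟩
    refine ⟨c, hc, e.symm u, by simpa using hu, e.injective ?_⟩
    rw [e.map_smul, e.apply_symm_apply, hcu]

variable [MeasurableSpace E] [BorelSpace E]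

def LinearIsometryEquiv.sphereMeasurableEquiv (e : E ≃ₗᵢ[ℝ] E) :
    sphere (0 : E) 1 ≃ᵐ sphere (0 : E) 1 :=
  (e.toHomeomorph.subtype fun x => by simp).toMeasurableEquiv

@[simp]
lemma LinearIsometryEquiv.coe_sphereMeasurableEquiv (e : E ≃ₗᵢ[ℝ] E) (z : sphere (0 : E) 1) :
    (e.sphereMeasurableEquiv z : E) = e z :=
  rfl

theorem MeasureTheory.Measure.measurePreserving_sphereMeasurableEquiv_toSphere
    {μ : Measure E} {e : E ≃ₗᵢ[ℝ] E} (he : MeasurePreserving e μ μ) :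
    MeasurePreserving e.sphereMeasurableEquiv μ.toSphere μ.toSphere := by
  refine ⟨e.sphereMeasurableEquiv.measurable, Measure.ext fun s hs => ?_⟩
  have hval : ((↑) '' (e.sphereMeasurableEquiv ⁻¹' s) : Set E) = e ⁻¹' ((↑) '' s) := by
    ext u
    constructor
    · rintro ⟨z, hz, rfl⟩
      exact ⟨_, hz, rfl⟩
    · rintro ⟨z, hz, hzu⟩
      refine ⟨e.symm.sphereMeasurableEquiv z, ?_, by simp [hzu]⟩
      rwa [mem_preimage, show e.sphereMeasurableEquiv (e.symm.sphereMeasurableEquiv z) = z from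
        Subtype.ext (e.apply_symm_apply z)]
  rw [Measure.map_apply e.sphereMeasurableEquiv.measurable hs,
    Measure.toSphere_apply' _ (e.sphereMeasurableEquiv.measurable hs), Measure.toSphere_apply' _ hs,
    hval, e.smul_preimage_eq_preimage_smul,
    he.measure_preimage_emb e.toHomeomorph.measurableEmbedding]

end SphereIsometry

section SphereMeasure

variable {d : ℕ}

local notation "E" => EuclideanSpace ℝ (Fin (d + 1))

instance : IsProbabilityMeasure (sphereMeasure d) :=
  haveI : NeZero (volume : Measure E).toSphere := ⟨Measure.toSphere_ne_zero _⟩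
  isProbabilityMeasureSMul

lemma measurePreserving_sphereMeasure (e : E ≃ₗᵢ[ℝ] E) :
    MeasurePreserving e.sphereMeasurableEquiv (sphereMeasure d) (sphereMeasure d) :=
  (Measure.measurePreserving_sphereMeasurableEquiv_toSphere e.measurePreserving).smul_measure _

lemma continuous_ip (x : Sphere d) : Continuous (ip x) :=
  continuous_const.inner continuous_subtype_val

lemma abs_ip_le_one (x z : Sphere d) : |ip x z| ≤ 1 := by
  simpa [ip] using abs_real_inner_le_norm (x : E) z

lemma integrable_of_continuous {g : Sphere d → ℝ} (hg : Continuous g) :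
    Integrable g (sphereMeasure d) :=
  hg.integrable_of_hasCompactSupport (HasCompactSupport.of_compactSpace g)

lemma integral_ip_eq_zero (x : Sphere d) : ∫ z, ip x z ∂(sphereMeasure d) = 0 := by
  have h := (measurePreserving_sphereMeasure (LinearIsometryEquiv.neg ℝ)).integral_comp' (ip x)
  simp only [ip, LinearIsometryEquiv.coe_sphereMeasurableEquiv, LinearIsometryEquiv.coe_neg,
    inner_neg_right, integral_neg] at h
  simp only [ip]
  linarith

-- The reflection in the hyperplane orthogonal to `p - q` exchanges `p` and `q`.
lemma integral_abs_ip_eq (q p : Sphere d) :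
    ∫ z, |ip q z| ∂(sphereMeasure d) = ∫ z, |ip p z| ∂(sphereMeasure d) := by
  set e := (ℝ ∙ ((p : E) - q))ᗮ.reflection
  have hpq : e p = q := Submodule.reflection_sub (by simp)
  rw [← (measurePreserving_sphereMeasure e).integral_comp' fun z => |ip q z|]
  simp only [ip, LinearIsometryEquiv.coe_sphereMeasurableEquiv, ← hpq, e.inner_map_map]

lemma integral_abs_inner_eq_norm_mul (v : E) (p : Sphere d) :
    ∫ z, |⟪v, (z : E)⟫| ∂(sphereMeasure d) = ‖v‖ * ∫ z, |ip p z| ∂(sphereMeasure d) := by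
  rcases eq_or_ne v 0 with rfl | hv
  · simp
  have hnv : ‖v‖ ≠ 0 := norm_ne_zero_iff.mpr hv
  let q : Sphere d := ⟨‖v‖⁻¹ • v, by simp [norm_smul, hnv]⟩
  have hq : ∀ z : Sphere d, |⟪v, (z : E)⟫| = ‖v‖ * |ip q z| := fun z => by
    simp only [ip, q, real_inner_smul_left, abs_mul, abs_inv, abs_norm]
    field_simp
  simp only [hq, integral_const_mul, integral_abs_ip_eq q p]

lemma integral_abs_ip_sub_ip (x y p : Sphere d) :
    ∫ z, |ip x z - ip y z| ∂(sphereMeasure d) = eucl x y * ∫ z, |ip p z| ∂(sphereMeasure d) := by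
  have hsub : ∀ z, ip x z - ip y z = ⟪(x : E) - y, (z : E)⟫ := fun z =>
    (inner_sub_left _ _ _).symm
  simp only [hsub, integral_abs_inner_eq_norm_mul _ p, eucl]

lemma integral_min_ip (x y : Sphere d) :
    ∫ z, min (ip x z) (ip y z) ∂(sphereMeasure d)
      = -(1 / 2 * ∫ z, |ip x z - ip y z| ∂(sphereMeasure d)) := by
  have hmin : ∀ a b : ℝ, min a b = (a + b - |a - b|) / 2 := fun a b => by
    linarith [min_add_max a b, max_sub_min_eq_abs' a b]
  have hx := integrable_of_continuous (continuous_ip x)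
  have hy := integrable_of_continuous (continuous_ip y)
  have hsum : Integrable (fun z => ip x z + ip y z) (sphereMeasure d) := hx.add hy
  have hdiff : Integrable (fun z => |ip x z - ip y z|) (sphereMeasure d) :=
    integrable_of_continuous ((continuous_ip x).sub (continuous_ip y)).abs
  simp only [hmin]
  rw [integral_div, integral_sub hsum hdiff, integral_add hx hy, integral_ip_eq_zero, integral_ip_eq_zero]
  ring

end SphereMeasure

theorem integral_measureReal_lt_eq_integral_sub {α : Type*} [MeasurableSpace α] {μ : Measure α}
    [IsFiniteMeasure μ] {f : α → ℝ} (hf : AEStronglyMeasurable f μ) {a b : ℝ} (hab : a ≤ b)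
    (ha : ∀ z, a ≤ f z) (hb : ∀ z, f z ≤ b) :
    ∫ t in a..b, μ.real {z | t < f z} = ∫ z, (f z - a) ∂μ := by
  have hint : Integrable (fun z => f z - a) μ :=
    .of_bound (hf.sub aestronglyMeasurable_const) (b - a) (ae_of_all _ fun z => by
      rw [Real.norm_eq_abs, abs_le]; constructor <;> linarith [ha z, hb z])
  have hvanish : ∀ t ∈ Ioi (0 : ℝ) \ Ioc 0 (b - a), μ.real {z | t < f z - a} = 0 := by
    rintro t ⟨ht0, ht⟩
    have htb : b - a < t := not_le.1 fun h => ht ⟨ht0, h⟩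
    have hempty : {z | t < f z - a} = ∅ :=
      eq_empty_of_forall_notMem fun z (hz : t < f z - a) => by linarith [hb z]
    simp [hempty]
  rw [hint.integral_eq_integral_meas_lt (ae_of_all _ fun z => sub_nonneg.2 (ha z)),
    setIntegral_eq_of_subset_of_ae_sdiff_eq_zero nullMeasurableSet_Ioi Ioc_subset_Ioi_self
      (ae_of_all _ hvanish),
    ← intervalIntegral.integral_of_le (sub_nonneg.2 hab),
    ← sub_self a, ← intervalIntegral.integral_comp_sub_right]
  simp only [sub_lt_sub_iff_right]

theorem cap_intersection_integral_general (d : ℕ) (x y p : Sphere d) :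
    (∫ t in (-1 : ℝ)..1, (sphereMeasure d (cap x t ∩ cap y t)).toReal)
      = 1 - (1 / 2 * ∫ w, |ip p w| ∂(sphereMeasure d)) * eucl x y := by
  have hcap : ∀ t, cap x t ∩ cap y t = {z | t < min (ip x z) (ip y z)} := fun t => by
    ext z
    simp [cap]
  have hcont : Continuous fun z => min (ip x z) (ip y z) := (continuous_ip x).min (continuous_ip y)
  calc (∫ t in (-1 : ℝ)..1, (sphereMeasure d (cap x t ∩ cap y t)).toReal)
      = ∫ z, (min (ip x z) (ip y z) - -1) ∂(sphereMeasure d) := by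
        simp only [hcap, ← measureReal_def]
        refine integral_measureReal_lt_eq_integral_sub hcont.aestronglyMeasurable (by norm_num)
          (fun z => ?_) (fun z => ?_)
        · exact le_min (abs_le.1 (abs_ip_le_one x z)).1 (abs_le.1 (abs_ip_le_one y z)).1
        · exact (min_le_left _ _).trans (abs_le.1 (abs_ip_le_one x z)).2
    _ = 1 + ∫ z, min (ip x z) (ip y z) ∂(sphereMeasure d) := by
        rw [integral_sub (integrable_of_continuous hcont) (integrable_const _), integral_const]
        simp only [probReal_univ, smul_eq_mul, mul_neg, mul_one, sub_neg_eq_add]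
        ring
    _ = 1 - (1 / 2 * ∫ w, |ip p w| ∂(sphereMeasure d)) * eucl x y := by
        rw [integral_min_ip, integral_abs_ip_sub_ip x y p]
        ring

/-- The average (over heights `t ∈ [-1,1]`) of the measure of the intersection of two spherical
caps `C(x,t) ∩ C(y,t)` equals `1 - C_d ‖x - y‖`, where
`C_d = (1/2) ∫_{S^d} |p·w| dσ(w)` (for any fixed `p ∈ S^d`). -/
theorem cap_intersection_integral (d : ℕ) (hd : 1 ≤ d) (x y p : Sphere d) :
    (∫ t in (-1 : ℝ)..1, (sphereMeasure d (cap x t ∩ cap y t)).toReal)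
      = 1 - (1 / 2 * ∫ w, |ip p w| ∂(sphereMeasure d)) * eucl x y :=
  cap_intersection_integral_general d x y p
end
end

section
/- Let d ≥ 1. For any N-point multiset Z = {z_1, …, z_N} on S^d, the average pairwise geodesic distance satisfies (1/N²) Σ_{i,j=1}^N d(z_i, z_j) ≤ 1/2. -/
open MeasureTheory Metric Set
open scoped RealInnerProductSpace ENNReal

noncomputable section

/-!
Since `arccos t = π/2 - arcsin t`, the claim is that `∑ᵢⱼ arcsin ⟪zᵢ, zⱼ⟫ ≥ 0`. The function
`F l = ∑ᵢⱼ arcsin (l ⟪zᵢ, zⱼ⟫)` vanishes at `0`, and on `(0, 1)` its derivative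
`∑ᵢⱼ ⟪zᵢ, zⱼ⟫ / √(1 - l² ⟪zᵢ, zⱼ⟫²)` expands by the binomial series into a combination, with
nonnegative coefficients, of the entry sums of Hadamard powers of the Gram matrix. These are
positive semidefinite by the Schur product theorem, so `F` is monotone on `[0, 1]` and `F 1 ≥ 0`.
-/

open Real Matrix

theorem Ring.choose_add_natCast_sub_one_nonneg {a : ℝ} (ha : 0 < a) (n : ℕ) :
    0 ≤ Ring.choose (a + n - 1) n := by
  rw [Ring.choose_eq_smul, Polynomial.descPochhammer_smeval_eq_ascPochhammer,
    Polynomial.ascPochhammer_smeval_eq_eval]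
  exact smul_nonneg (by positivity) (ascPochhammer_pos _ _ (by linarith)).le

theorem hasSum_one_div_sqrt_one_sub {u : ℝ} (hu : |u| < 1) :
    HasSum (fun n : ℕ => Ring.choose ((1 / 2 : ℝ) + n - 1) n * u ^ n) (1 / √(1 - u)) := by
  have := (one_div_one_sub_rpow_hasFPowerSeriesOnBall_zero (1 / 2)).hasSum (y := u)
    (by simpa [enorm_eq_nnnorm, ← NNReal.coe_lt_coe] using hu)
  simpa [FormalMultilinearSeries.ofScalars_apply_eq, sqrt_eq_rpow, mul_comm] using this

theorem hasDerivAt_arcsin_mul_const {x l : ℝ} (h : |l * x| < 1) :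
    HasDerivAt (fun s => arcsin (s * x)) (1 / √(1 - (l * x) ^ 2) * x) l := by
  obtain ⟨h₁, h₂⟩ := abs_lt.mp h
  exact (hasDerivAt_arcsin h₁.ne' h₂.ne).comp l (hasDerivAt_mul_const x)

theorem Matrix.PosSemidef.sum_sum_nonneg {ι : Type*} [Fintype ι] {A : Matrix ι ι ℝ}
    (hA : A.PosSemidef) : 0 ≤ ∑ i, ∑ j, A i j := by
  simpa [dotProduct, mulVec, Finset.sum_comm (γ := ι)] using hA.dotProduct_mulVec_nonneg 1

section InnerProductSpace

variable {ι E : Type*} [NormedAddCommGroup E] [InnerProductSpace ℝ E]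

theorem posSemidef_inner_pow [Finite ι] (v : ι → E) (n : ℕ) :
    (of fun i j => ⟪v i, v j⟫ ^ n).PosSemidef := by
  induction n with
  | zero => simpa [vecMulVec] using posSemidef_vecMulVec_self_star (1 : ι → ℝ)
  | succ n ih =>
    have hpow : (of fun i j => ⟪v i, v j⟫ ^ (n + 1)) =
        gram ℝ v ⊙ of fun i j => ⟪v i, v j⟫ ^ n := by
      ext i j
      simp [pow_succ']
    exact hpow ▸ (posSemidef_gram ℝ v).hadamard ih

theorem sum_sum_nonneg_of_hasSum_inner_pow [Fintype ι] (v : ι → E) {a : ℕ → ℝ}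
    (ha : ∀ n, 0 ≤ a n) (k : ℕ → ℕ) {F : ι → ι → ℝ}
    (hF : ∀ i j, HasSum (fun n => a n * ⟪v i, v j⟫ ^ k n) (F i j)) :
    0 ≤ ∑ i, ∑ j, F i j := by
  have hsum := hasSum_sum (s := Finset.univ) fun i _ =>
    hasSum_sum (s := Finset.univ) fun j _ => hF i j
  refine hsum.nonneg fun n => ?_
  simp only [← Finset.mul_sum]
  exact mul_nonneg (ha n) (posSemidef_inner_pow v (k n)).sum_sum_nonneg

theorem abs_mul_inner_lt_one {v w : E} (hv : ‖v‖ ≤ 1) (hw : ‖w‖ ≤ 1) {l : ℝ}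
    (hl : l ∈ Ioo 0 1) : |l * ⟪v, w⟫| < 1 := by
  have : |⟪v, w⟫| ≤ 1 := (abs_real_inner_le_norm v w).trans (mul_le_one₀ hv (norm_nonneg w) hw)
  calc |l * ⟪v, w⟫| = l * |⟪v, w⟫| := by rw [abs_mul, abs_of_pos hl.1]
    _ ≤ l * 1 := mul_le_mul_of_nonneg_left this hl.1.le
    _ < 1 := by linarith [hl.2]

variable [Fintype ι]

theorem sum_sum_deriv_arcsin_nonneg (v : ι → E) (hv : ∀ i, ‖v i‖ ≤ 1) {l : ℝ}
    (hl : l ∈ Ioo 0 1) :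
    0 ≤ ∑ i, ∑ j, 1 / √(1 - (l * ⟪v i, v j⟫) ^ 2) * ⟪v i, v j⟫ := by
  refine sum_sum_nonneg_of_hasSum_inner_pow v
    (a := fun n => Ring.choose ((1 / 2 : ℝ) + n - 1) n * l ^ (2 * n))
    (fun n => mul_nonneg (Ring.choose_add_natCast_sub_one_nonneg (by norm_num) n)
      (pow_nonneg hl.1.le _)) (fun n => 2 * n + 1) fun i j => ?_
  have hu : |(l * ⟪v i, v j⟫) ^ 2| < 1 := by
    have := abs_mul_inner_lt_one (hv i) (hv j) hl
    rw [abs_pow]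
    nlinarith [abs_nonneg (l * ⟪v i, v j⟫)]
  exact ((hasSum_one_div_sqrt_one_sub hu).mul_right ⟪v i, v j⟫).congr_fun fun n => by ring

theorem monotoneOn_sum_sum_arcsin_mul_inner (v : ι → E) (hv : ∀ i, ‖v i‖ ≤ 1) :
    MonotoneOn (fun l => ∑ i, ∑ j, arcsin (l * ⟪v i, v j⟫)) (Icc 0 1) := by
  refine monotoneOn_of_hasDerivWithinAt_nonneg (convex_Icc 0 1) (by fun_prop)
    (f' := fun l => ∑ i, ∑ j, 1 / √(1 - (l * ⟪v i, v j⟫) ^ 2) * ⟪v i, v j⟫)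
    (fun l hl => ?_) (fun l hl => ?_)
  all_goals rw [interior_Icc] at hl
  · refine HasDerivAt.hasDerivWithinAt ?_
    refine HasDerivAt.fun_sum fun i _ => HasDerivAt.fun_sum fun j _ => ?_
    exact hasDerivAt_arcsin_mul_const (abs_mul_inner_lt_one (hv i) (hv j) hl)
  · exact sum_sum_deriv_arcsin_nonneg v hv hl

theorem sum_sum_arcsin_inner_nonneg (v : ι → E) (hv : ∀ i, ‖v i‖ ≤ 1) :
    0 ≤ ∑ i, ∑ j, arcsin ⟪v i, v j⟫ := by
  simpa using monotoneOn_sum_sum_arcsin_mul_inner v hv (by simp) (by simp) zero_le_one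

end InnerProductSpace

theorem geo_eq_one_div_two_sub {d : ℕ} (x y : Sphere d) :
    geo x y = 1 / 2 - arcsin (ip x y) / π := by
  rw [geo, arccos_eq_pi_div_two_sub_arcsin, sub_div, div_div_cancel_left' pi_ne_zero]
  ring

theorem geodesic_sum_le_half_general (d N : ℕ) (z : Fin N → Sphere d) :
    (1 / (N : ℝ) ^ 2) * ∑ i, ∑ j, geo (z i) (z j) ≤ 1 / 2 := by
  set S := ∑ i, ∑ j, arcsin (ip (z i) (z j))
  have hS : 0 ≤ S :=
    sum_sum_arcsin_inner_nonneg (fun i => (z i : EuclideanSpace ℝ (Fin (d + 1))))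
      fun i => (norm_eq_of_mem_sphere (z i)).le
  have hsum : ∑ i, ∑ j, geo (z i) (z j) = (N : ℝ) ^ 2 / 2 - S / π := by
    simp only [S, geo_eq_one_div_two_sub, Finset.sum_sub_distrib, Finset.sum_const,
      Finset.card_univ, Fintype.card_fin, ← Finset.sum_div, nsmul_eq_mul]
    ring
  have hhalf : 1 / (N : ℝ) ^ 2 * ((N : ℝ) ^ 2 / 2) ≤ 1 / 2 :=
    calc 1 / (N : ℝ) ^ 2 * ((N : ℝ) ^ 2 / 2) = (N : ℝ) ^ 2 / (N : ℝ) ^ 2 / 2 := by ring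
      _ ≤ 1 / 2 := by gcongr; exact div_self_le_one _
  have hcorr : 0 ≤ 1 / (N : ℝ) ^ 2 * (S / π) := mul_nonneg (by positivity) (by positivity)
  rw [hsum, mul_sub]
  linarith

/-- For any `N`-point configuration on `S^d`, the average pairwise normalized geodesic distance
is at most `1/2`. -/
theorem geodesic_sum_le_half (d N : ℕ) (hd : 1 ≤ d) (hN : 1 ≤ N) (z : Fin N → Sphere d) :
    (1 / (N : ℝ) ^ 2) * ∑ i, ∑ j, geo (z i) (z j) ≤ 1 / 2 :=
  geodesic_sum_le_half_general d N z
end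
end

section
/- Let d ≥ 1 and let N be even. For any N-point multiset Z = {z_1, …, z_N} on S^d, (1/N²) Σ_{i,j=1}^N d(z_i, z_j) ≤ 1/2, and equality holds if and only if Z is centrally symmetric, i.e., there exists a permutation π of {1,…,N} such that z_{π(i)} = −z_i for all i. -/
open MeasureTheory Metric Set
open scoped RealInnerProductSpace ENNReal

noncomputable section

/-!
Since `arccos = π / 2 - arcsin`, the claim is that `∑ᵢⱼ arcsin ⟪zᵢ, zⱼ⟫ ≥ 0`, with equality
exactly for centrally symmetric configurations. The Taylor series of `arcsin` has positive
coefficients and only odd powers, and by the Schur product theorem every odd moment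
`∑ᵢⱼ ⟪zᵢ, zⱼ⟫ ^ (2k+1)` of the Gram matrix is nonnegative; this gives the inequality. At equality
all odd moments vanish. As `k → ∞` they tend to `#{zᵢ = zⱼ} - #{zᵢ = -zⱼ}`, and equality of these
two pair counts forces every point to occur as often as its antipode.
-/

section ArcsinSeries

open Real Filter

def invSqrtCoeff (k : ℕ) : ℝ := Ring.choose ((1 / 2 : ℝ) + k - 1) k

lemma invSqrtCoeff_pos (k : ℕ) : 0 < invSqrtCoeff k := by
  rw [invSqrtCoeff, Ring.choose_eq_smul, Polynomial.descPochhammer_smeval_eq_ascPochhammer,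
    Polynomial.ascPochhammer_smeval_eq_eval, smul_eq_mul]
  exact mul_pos (by positivity) (ascPochhammer_pos _ _ (by linarith))

lemma hasSum_invSqrtCoeff_mul_pow {u : ℝ} (hu : |u| < 1) :
    HasSum (fun k => invSqrtCoeff k * u ^ k) (√(1 - u))⁻¹ := by
  have := (one_div_one_sub_rpow_hasFPowerSeriesOnBall_zero (1 / 2)).hasSum
    (y := u) (by simpa [enorm_eq_nnnorm, ← NNReal.coe_lt_one] using hu)
  simpa [invSqrtCoeff, FormalMultilinearSeries.ofScalars_apply_eq, Real.sqrt_eq_rpow, mul_comm]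
    using this

def arcsinCoeff (k : ℕ) : ℝ := invSqrtCoeff k / (2 * k + 1)

lemma arcsinCoeff_pos (k : ℕ) : 0 < arcsinCoeff k :=
  div_pos (invSqrtCoeff_pos k) (by positivity)

lemma hasSum_arcsin {s : ℝ} (hs : |s| < 1) :
    HasSum (fun k => arcsinCoeff k * s ^ (2 * k + 1)) (arcsin s) := by
  have hle : ∀ x ∈ uIcc 0 s, |x| ≤ |s| := fun x hx => by
    simpa using Set.abs_sub_left_of_mem_uIcc hx
  have hsq : ∀ x ∈ uIcc 0 s, |x ^ 2| < 1 := fun x hx => by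
    rw [abs_pow, sq_lt_one_iff₀ (abs_nonneg x)]; exact (hle x hx).trans_lt hs
  have hderiv : ∀ x ∈ uIcc 0 s, HasDerivAt arcsin (√(1 - x ^ 2))⁻¹ x := fun x hx => by
    have := abs_lt.mp ((hle x hx).trans_lt hs)
    simpa using hasDerivAt_arcsin (by linarith) (by linarith)
  have hcont : ContinuousOn (fun x => (√(1 - x ^ 2))⁻¹) (uIcc 0 s) :=
    (continuous_sqrt.comp (by fun_prop)).continuousOn.inv₀ fun x hx => by
      have := (abs_lt.mp (hsq x hx)).2
      exact (sqrt_pos.mpr (by linarith)).ne'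
  have hFTC := intervalIntegral.integral_eq_sub_of_hasDerivAt hderiv hcont.intervalIntegrable
  rw [arcsin_zero, sub_zero] at hFTC
  rw [← hFTC]
  have hterm (k : ℕ) : ∫ x in (0 : ℝ)..s, invSqrtCoeff k * (x ^ 2) ^ k =
      arcsinCoeff k * s ^ (2 * k + 1) := by
    simp only [arcsinCoeff, ← pow_mul, intervalIntegral.integral_const_mul, integral_pow]
    rw [zero_pow (by omega)]
    push_cast
    ring
  simp only [← hterm]
  refine intervalIntegral.hasSum_integral_of_dominated_convergence
    (fun k _ => invSqrtCoeff k * (s ^ 2) ^ k) (fun k => by fun_prop) (fun k => ?_) ?_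
    intervalIntegrable_const ?_
  · refine Eventually.of_forall fun x hx => ?_
    have hx := hle x (uIoc_subset_uIcc hx)
    rw [norm_mul, norm_pow, Real.norm_of_nonneg (invSqrtCoeff_pos k).le, norm_pow,
      Real.norm_eq_abs, ← sq_abs s]
    gcongr
    exact (invSqrtCoeff_pos k).le
  · exact Eventually.of_forall fun _ _ =>
      (hasSum_invSqrtCoeff_mul_pow (hsq s right_mem_uIcc)).summable
  · exact Eventually.of_forall fun x hx =>
      hasSum_invSqrtCoeff_mul_pow (hsq x (uIoc_subset_uIcc hx))

end ArcsinSeries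

section OddMoments

open Real Filter Topology Finset

variable {κ : Type*} [Fintype κ] {t : κ → ℝ}

lemma tendsto_pow_two_mul_add_one {x : ℝ} (hx : |x| ≤ 1) :
    Tendsto (fun k : ℕ => x ^ (2 * k + 1)) atTop
      (𝓝 ((if x = 1 then 1 else 0) - if x = -1 then 1 else 0)) := by
  rcases eq_or_ne x 1 with rfl | h1
  · norm_num
  rcases eq_or_ne x (-1) with rfl | h2
  · norm_num [pow_succ, pow_mul]
  have hx2 : x ^ 2 < 1 := by
    rw [sq_lt_one_iff_abs_lt_one]; exact lt_of_le_of_ne hx (by simp [abs_eq, h1, h2])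
  have hpow : (fun k : ℕ => x ^ (2 * k + 1)) = fun k => (x ^ 2) ^ k * x := by ext k; ring
  simpa [h1, h2, hpow] using (tendsto_pow_atTop_nhds_zero_of_lt_one (sq_nonneg x) hx2).mul_const x

lemma hasSum_sum_arcsin_mul (ht : ∀ a, |t a| ≤ 1) {r : ℝ} (hr : |r| < 1) :
    HasSum (fun k => arcsinCoeff k * r ^ (2 * k + 1) * ∑ a, t a ^ (2 * k + 1))
      (∑ a, arcsin (r * t a)) := by
  have hterm (a : κ) := hasSum_arcsin (s := r * t a) (by
    rw [abs_mul]; nlinarith [abs_nonneg r, abs_nonneg (t a), ht a])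
  convert hasSum_sum fun a _ => hterm a using 2 with k
  simp only [mul_sum, mul_pow, mul_assoc]

lemma sum_arcsin_mul_le (ht : ∀ a, |t a| ≤ 1) (hM : ∀ k, 0 ≤ ∑ a, t a ^ (2 * k + 1)) {r : ℝ}
    (hr0 : 0 ≤ r) (hr1 : r ≤ 1) : ∑ a, arcsin (r * t a) ≤ ∑ a, arcsin (t a) := by
  rcases hr1.eq_or_lt with rfl | hr1
  · simp
  have hmono : ∀ r' ∈ Ioo r 1, ∑ a, arcsin (r * t a) ≤ ∑ a, arcsin (r' * t a) := fun r' hr' =>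
    hasSum_le (fun k => by have := arcsinCoeff_pos k; have := hM k; gcongr; exact hr'.1.le)
      (hasSum_sum_arcsin_mul ht (by rw [abs_of_nonneg hr0]; exact hr1))
      (hasSum_sum_arcsin_mul ht (by rw [abs_of_pos (hr0.trans_lt hr'.1)]; exact hr'.2))
  -- the series converges only for `|r'| < 1`, so `r' = 1` is reached as a limit
  have hlim : Tendsto (fun r' => ∑ a, arcsin (r' * t a)) (𝓝[<] 1) (𝓝 (∑ a, arcsin (1 * t a))) :=
    ((by fun_prop : Continuous fun r' : ℝ => ∑ a, arcsin (r' * t a)).tendsto 1).mono_left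
      nhdsWithin_le_nhds
  simpa using ge_of_tendsto hlim (by filter_upwards [Ioo_mem_nhdsLT hr1] using hmono)

lemma sum_arcsin_nonneg (ht : ∀ a, |t a| ≤ 1) (hM : ∀ k, 0 ≤ ∑ a, t a ^ (2 * k + 1)) :
    0 ≤ ∑ a, arcsin (t a) := by
  simpa using sum_arcsin_mul_le ht hM le_rfl zero_le_one

lemma sum_pow_odd_eq_zero_of_sum_arcsin_eq_zero (ht : ∀ a, |t a| ≤ 1)
    (hM : ∀ k, 0 ≤ ∑ a, t a ^ (2 * k + 1)) (h : ∑ a, arcsin (t a) = 0) (k : ℕ) :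
    ∑ a, t a ^ (2 * k + 1) = 0 := by
  have hpos (j : ℕ) : 0 < arcsinCoeff j * (1 / 2 : ℝ) ^ (2 * j + 1) := by
    have := arcsinCoeff_pos j; positivity
  have hterm : arcsinCoeff k * (1 / 2 : ℝ) ^ (2 * k + 1) * ∑ a, t a ^ (2 * k + 1) ≤ 0 := by
    refine (le_hasSum (hasSum_sum_arcsin_mul ht (by norm_num)) k fun j _ => ?_).trans ?_
    · exact mul_nonneg (hpos j).le (hM j)
    · exact h ▸ sum_arcsin_mul_le ht hM (by norm_num) (by norm_num)
  exact le_antisymm (nonpos_of_mul_nonpos_right hterm (hpos k)) (hM k)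

lemma card_eq_one_eq_card_eq_neg_one (ht : ∀ a, |t a| ≤ 1)
    (h : ∀ k, ∑ a, t a ^ (2 * k + 1) = 0) :
    #{a | t a = 1} = #{a | t a = -1} := by
  have hlim := tendsto_finsetSum univ fun a _ => tendsto_pow_two_mul_add_one (ht a)
  simp only [h, sum_sub_distrib, sum_boole] at hlim
  exact_mod_cast sub_eq_zero.mp (tendsto_nhds_unique tendsto_const_nhds hlim).symm

end OddMoments

section Fibers

open Finset

variable {ι α : Type*} [Fintype ι] [DecidableEq α]

lemma exists_perm_apply_eq_of_card_fiber_eq {f g : ι → α}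
    (h : ∀ v, #{i | f i = v} = #{i | g i = v}) : ∃ σ : Equiv.Perm ι, ∀ i, f (σ i) = g i := by
  have e (v : α) : {i // g i = v} ≃ {i // f i = v} :=
    Fintype.equivOfCardEq (by simp only [Fintype.card_subtype, h])
  exact ⟨(Equiv.sigmaFiberEquiv g).symm.trans
    ((Equiv.sigmaCongrRight e).trans (Equiv.sigmaFiberEquiv f)), fun i => (e (g i) ⟨i, rfl⟩).2⟩

lemma sum_card_fiber_mul {g : ι → α} {S : Finset α} (hg : ∀ i, g i ∈ S) (F : α → ℤ) :
    ∑ v ∈ S, (#{i | g i = v} : ℤ) * F v = ∑ i, F (g i) := by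
  rw [← sum_fiberwise_of_maps_to (fun i _ => hg i)]
  refine sum_congr rfl fun v _ => ?_
  rw [sum_congr rfl fun i hi => congrArg F (mem_filter.mp hi).2, sum_const, nsmul_eq_mul]

variable [InvolutiveNeg α]

lemma card_fiber_eq_card_fiber_neg {f : ι → α}
    (h : #{p : ι × ι | f p.1 = f p.2} = #{p : ι × ι | f p.1 = -f p.2}) (v : α) :
    #{i | f i = v} = #{i | f i = -v} := by
  set m : α → ℤ := fun v => #{i | f i = v}
  set D : α → ℤ := fun v => m v - m (-v)
  have hpairs : ∑ i, m (f i) = ∑ i, m (-f i) := by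
    simp only [card_filter, Fintype.sum_prod_type_right] at h
    simp only [m, card_filter]
    exact_mod_cast h
  have hD : ∑ i, D (f i) = 0 := by simp only [D, sum_sub_distrib, hpairs, sub_self]
  have hD' : ∑ i, D (-f i) = 0 := by simp only [D, sum_sub_distrib, neg_neg, hpairs, sub_self]
  set S := Finset.univ.image f ∪ Finset.univ.image (fun i => -f i)
  have hmS : ∀ i, f i ∈ S := fun i => mem_union_left _ (mem_image_of_mem _ (mem_univ i))
  have hmS' : ∀ i, -f i ∈ S := fun i => mem_union_right _ (mem_image_of_mem _ (mem_univ i))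
  -- `∑ v ∈ S, D v ^ 2` is twice the number of coincident minus antipodal pairs
  have hsq : ∑ v ∈ S, D v ^ 2 = 0 := by
    have hneg (v : α) : m (-v) = #{i | -f i = v} := by simp only [m, neg_eq_iff_eq_neg]
    calc ∑ v ∈ S, D v ^ 2 = ∑ v ∈ S, m v * D v - ∑ v ∈ S, m (-v) * D v := by
          rw [← sum_sub_distrib]; exact sum_congr rfl fun v _ => by ring
      _ = 0 := by
          simp only [hneg]
          rw [sum_card_fiber_mul hmS, sum_card_fiber_mul hmS', hD, hD', sub_self]
  by_cases hv : v ∈ S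
  · have := pow_eq_zero_iff (n := 2) (by norm_num) |>.mp
      ((sum_eq_zero_iff_of_nonneg fun w _ => sq_nonneg (D w)).mp hsq v hv)
    simpa only [D, m, sub_eq_zero, Nat.cast_inj] using this
  · have hfv : #{i | f i = v} = 0 :=
      card_eq_zero.mpr (filter_eq_empty_iff.mpr fun i _ hi => hv (hi ▸ hmS i))
    have hfv' : #{i | f i = -v} = 0 :=
      card_eq_zero.mpr (filter_eq_empty_iff.mpr fun i _ hi => hv (by simpa [hi] using hmS' i))
    rw [hfv, hfv']

end Fibers

section InnerProductSpace

open Real Finset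

variable {E ι : Type*} [NormedAddCommGroup E] [InnerProductSpace ℝ E]

lemma abs_real_inner_le_one {a b : E} (ha : ‖a‖ ≤ 1) (hb : ‖b‖ ≤ 1) : |⟪a, b⟫| ≤ 1 :=
  (abs_real_inner_le_norm a b).trans (mul_le_one₀ ha (norm_nonneg b) hb)

variable [Fintype ι]

lemma sum_inner_pow_succ_nonneg (x : ι → E) (m : ℕ) :
    0 ≤ ∑ p : ι × ι, ⟪x p.1, x p.2⟫ ^ (m + 1) := by
  have hpsd : (Matrix.of fun i j => ⟪x i, x j⟫ ^ (m + 1)).PosSemidef := by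
    induction m with
    | zero =>
      simp only [zero_add, pow_one]
      exact Matrix.posSemidef_gram ℝ x
    | succ m ih =>
      have hprod : (Matrix.gram ℝ x).hadamard (Matrix.of fun i j => ⟪x i, x j⟫ ^ (m + 1)) =
          Matrix.of fun i j => ⟪x i, x j⟫ ^ (m + 1 + 1) := by
        ext i j; simp [Matrix.gram_apply, pow_succ, mul_comm]
      exact hprod ▸ (Matrix.posSemidef_gram ℝ x).hadamard ih
  simpa [dotProduct, Matrix.mulVec, Fintype.sum_prod_type, mul_sum] using
    hpsd.dotProduct_mulVec_nonneg 1

variable {x : ι → E}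

lemma sum_arcsin_inner_nonneg (hx : ∀ i, ‖x i‖ ≤ 1) :
    0 ≤ ∑ p : ι × ι, arcsin ⟪x p.1, x p.2⟫ :=
  sum_arcsin_nonneg (fun p => abs_real_inner_le_one (hx p.1) (hx p.2))
    fun k => sum_inner_pow_succ_nonneg x (2 * k)

lemma sum_arcsin_inner_eq_zero_iff (hx : ∀ i, ‖x i‖ = 1) :
    ∑ p : ι × ι, arcsin ⟪x p.1, x p.2⟫ = 0 ↔ ∃ σ : Equiv.Perm ι, ∀ i, x (σ i) = -x i := by
  classical
  constructor
  · intro h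
    have ht (p : ι × ι) := abs_real_inner_le_one (hx p.1).le (hx p.2).le
    have hodd := sum_pow_odd_eq_zero_of_sum_arcsin_eq_zero ht
      (fun k => sum_inner_pow_succ_nonneg x (2 * k)) h
    have hcard := card_eq_one_eq_card_eq_neg_one ht hodd
    simp only [inner_eq_one_iff_of_norm_eq_one (hx _) (hx _),
      inner_eq_neg_one_iff_of_norm_eq_one (hx _) (hx _)] at hcard
    refine exists_perm_apply_eq_of_card_fiber_eq fun v => ?_
    simpa only [neg_eq_iff_eq_neg] using card_fiber_eq_card_fiber_neg hcard v
  · rintro ⟨σ, hσ⟩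
    have hanti :
        ∑ p : ι × ι, arcsin ⟪x p.1, x (σ p.2)⟫ = -∑ p : ι × ι, arcsin ⟪x p.1, x p.2⟫ := by
      simp [hσ, arcsin_neg]
    have hreindex := (Equiv.prodCongr (Equiv.refl ι) σ).sum_comp fun p => arcsin ⟪x p.1, x p.2⟫
    simp only [Equiv.prodCongr_apply, Equiv.coe_refl, Prod.map_fst, Prod.map_snd, id] at hreindex
    linarith

end InnerProductSpace

lemma geo_eq_half_sub_arcsin {d : ℕ} (x y : Sphere d) :
    geo x y = 1 / 2 - Real.arcsin (ip x y) / Real.pi := by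
  rw [geo, Real.arccos_eq_pi_div_two_sub_arcsin]
  field_simp

theorem geodesic_sum_max_even_general (d N : ℕ) (hN : 1 ≤ N)
    (z : Fin N → Sphere d) :
    (1 / (N : ℝ) ^ 2) * ∑ i, ∑ j, geo (z i) (z j) ≤ 1 / 2
    ∧ ((1 / (N : ℝ) ^ 2) * ∑ i, ∑ j, geo (z i) (z j) = 1 / 2
        ↔ ∃ π : Equiv.Perm (Fin N), ∀ i, z (π i) = -(z i)) := by
  set x : Fin N → EuclideanSpace ℝ (Fin (d + 1)) := fun i => z i
  have hx (i : Fin N) : ‖x i‖ = 1 := norm_eq_of_mem_sphere (z i)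
  set S := ∑ p : Fin N × Fin N, Real.arcsin ⟪x p.1, x p.2⟫
  have havg : (1 / (N : ℝ) ^ 2) * ∑ i, ∑ j, geo (z i) (z j) = 1 / 2 - S / (Real.pi * N ^ 2) := by
    have hN0 : (N : ℝ) ≠ 0 := by positivity
    simp only [geo_eq_half_sub_arcsin, ip, Finset.sum_sub_distrib, ← Finset.sum_div, S,
      Fintype.sum_prod_type, Finset.sum_const, Finset.card_univ, Fintype.card_fin, nsmul_eq_mul]
    field_simp
    ring
  have hSpos : 0 ≤ S / (Real.pi * N ^ 2) :=
    div_nonneg (sum_arcsin_inner_nonneg fun i => (hx i).le) (by positivity)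
  refine ⟨by linarith, ?_⟩
  rw [havg, sub_eq_self, div_eq_zero_iff, or_iff_left (by positivity),
    sum_arcsin_inner_eq_zero_iff hx]
  simp only [x, ← coe_neg_sphere, Subtype.coe_inj]

/-- For even `N`, the average pairwise geodesic distance of an `N`-point configuration is at most
`1/2`, with equality if and only if the configuration is centrally symmetric (some permutation
sends each point to its antipode). -/
theorem geodesic_sum_max_even (d N : ℕ) (hd : 1 ≤ d) (hN : 1 ≤ N) (hNe : Even N)
    (z : Fin N → Sphere d) :
    (1 / (N : ℝ) ^ 2) * ∑ i, ∑ j, geo (z i) (z j) ≤ 1 / 2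
    ∧ ((1 / (N : ℝ) ^ 2) * ∑ i, ∑ j, geo (z i) (z j) = 1 / 2
        ↔ ∃ π : Equiv.Perm (Fin N), ∀ i, z (π i) = -(z i)) :=
  geodesic_sum_max_even_general d N hN z
end
end

section
/- (Spherical Sylvester–Gallai theorem) Let d ≥ 2 and let Z be a finite set of points on S^d containing no pair of antipodal points, and suppose that for every two distinct points x, y ∈ Z the great circle passing through x and y contains at least one point of Z other than x and y (i.e., there exists z ∈ Z with z ∉ {x,y} and z in the linear span of {x,y}). Then all points of Z lie on one great circle: there exists a two-dimensional linear subspace V of ℝ^{d+1} with Z ⊆ V ∩ S^d. -/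
/-!
Kelly's descent argument, transplanted to the sphere. Among the triples `(z, x, y)` of points of
`Z` with `z` off the great circle through `x` and `y`, pick one minimizing the distance from `z`
to the plane `V = span {x, y}`, and let `w` be a third point of `Z` on that circle. The projection
`P` of `z` to `V` lies inside the unit disc of `V`, and a planar argument shows that two of
`x, y, w`, say `u ≠ v`, satisfy `⟪z, v⟫² = ⟪P, v⟫² < ⟪u, v⟫²`. Since
`dist (z, span {u, v})² (1 - ⟪u, v⟫²)` and `dist (u, span {z, v})² (1 - ⟪z, v⟫²)` both equal the
Gram determinant of `u, v, z`, the triple `(u, z, v)` is strictly better, a contradiction.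
-/

open MeasureTheory Metric Set
open scoped RealInnerProductSpace ENNReal

noncomputable section

section

open Module Submodule

theorem sq_le_mul_add_mul_sq_of_same_side {a₀ a₁ b₀ b₁ : ℝ} (ha : a₀ ^ 2 + a₁ ^ 2 = 1)
    (hb : b₀ ^ 2 + b₁ ^ 2 = 1) (hside : 0 ≤ a₀ * a₁ * (b₀ * b₁)) (hab : b₀ ^ 2 ≤ a₀ ^ 2) :
    b₀ ^ 2 ≤ (a₀ * b₀ + a₁ * b₁) ^ 2 := by
  have hcross : a₁ ^ 2 * b₀ ^ 2 ≤ a₀ * a₁ * (b₀ * b₁) := by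
    refine le_of_sq_le_sq ?_ hside
    have : (a₀ * a₁ * (b₀ * b₁)) ^ 2 - (a₁ ^ 2 * b₀ ^ 2) ^ 2 =
        a₁ ^ 2 * b₀ ^ 2 * (a₀ ^ 2 - b₀ ^ 2) := by
      linear_combination (a₁ ^ 2 * b₀ ^ 2 * a₀ ^ 2) * hb - (a₁ ^ 2 * b₀ ^ 4) * ha
    nlinarith [mul_nonneg (sq_nonneg (a₁ * b₀)) (sub_nonneg.2 hab)]
  nlinarith [sq_nonneg a₁, sq_nonneg b₁]

theorem exists_ne_mul_nonneg (s : Fin 3 → ℝ) : ∃ i j, i ≠ j ∧ 0 ≤ s i * s j := by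
  by_contra! h
  nlinarith [mul_pos_of_neg_of_neg (h 0 1 (by decide)) (h 0 2 (by decide)), h 1 2 (by decide),
    sq_nonneg (s 0 * s 1 * s 2)]

variable {E : Type*} [NormedAddCommGroup E] [InnerProductSpace ℝ E]

theorem inner_sq_lt_one_of_ne_of_ne_neg {x y : E} (hx : ‖x‖ = 1) (hy : ‖y‖ = 1) (hne : x ≠ y)
    (hne' : x ≠ -y) : ⟪x, y⟫ ^ 2 < 1 := by
  have hsub : 0 < ‖x - y‖ ^ 2 := by positivity [sub_ne_zero.2 hne]
  have hadd : 0 < ‖x + y‖ ^ 2 := by positivity [fun h => hne' (eq_neg_of_add_eq_zero_left h)]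
  rw [norm_sub_sq_real, hx, hy] at hsub
  rw [norm_add_sq_real, hx, hy] at hadd
  nlinarith

theorem linearIndependent_pair_of_inner_sq_lt_one {x y : E} (hx : ‖x‖ = 1) (hy : ‖y‖ = 1)
    (hxy : ⟪x, y⟫ ^ 2 < 1) : LinearIndependent ℝ ![x, y] := by
  rw [LinearIndependent.pair_iff]
  intro s t hst
  have hx' := congrArg (⟪x, ·⟫) hst
  have hy' := congrArg (⟪y, ·⟫) hst
  simp only [inner_add_right, real_inner_smul_right, real_inner_self_eq_norm_sq, hx, hy,
    real_inner_comm x y, inner_zero_right, one_pow, mul_one] at hx' hy'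
  have ht : t * (1 - ⟪x, y⟫ ^ 2) = 0 := by linear_combination hy' - ⟪x, y⟫ * hx'
  have ht₀ : t = 0 := (mul_eq_zero.1 ht).resolve_right (by linarith)
  exact ⟨by simpa [ht₀] using hx', ht₀⟩

theorem finrank_span_pair_eq_two {x y : E} (h : LinearIndependent ℝ ![x, y]) :
    finrank ℝ (span ℝ {x, y}) = 2 := by
  have := finrank_span_eq_card h
  rwa [Matrix.range_cons_cons_empty, Fintype.card_fin] at this

theorem span_pair_eq_of_mem_span_pair {x y u v : E} (hxy : LinearIndependent ℝ ![x, y])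
    (huv : LinearIndependent ℝ ![u, v]) (hu : u ∈ span ℝ {x, y}) (hv : v ∈ span ℝ {x, y}) :
    span ℝ {u, v} = span ℝ {x, y} := by
  have := Module.finite_of_finrank_eq_succ (finrank_span_pair_eq_two hxy)
  refine eq_of_le_of_finrank_eq (span_le.2 (pair_subset hu hv)) ?_
  rw [finrank_span_pair_eq_two huv, finrank_span_pair_eq_two hxy]

theorem exists_finrank_eq_two_of_mem (h : 1 < finrank ℝ E) {x : E} (hx : x ≠ 0) :
    ∃ V : Submodule ℝ E, finrank ℝ V = 2 ∧ x ∈ V :=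
  let ⟨_, hy⟩ := exists_linearIndependent_pair_of_one_lt_finrank h hx
  ⟨_, finrank_span_pair_eq_two hy, subset_span (mem_insert _ _)⟩

theorem infDist_eq_norm_sub_of_inner_eq_zero (K : Submodule ℝ E) {z q : E} (hq : q ∈ K)
    (h : ∀ w ∈ K, ⟪z - q, w⟫ = 0) : infDist z K = ‖z - q‖ := by
  rw [infDist_eq_iInf, (K.norm_eq_iInf_iff_real_inner_eq_zero hq).2 h]
  simp [dist_eq_norm]

/-- The right-hand side is the Gram determinant of the unit vectors `u, v, z`. -/
theorem infDist_span_pair_sq_mul {u v z : E} (hu : ‖u‖ = 1) (hv : ‖v‖ = 1) (hz : ‖z‖ = 1)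
    (huv : ⟪u, v⟫ ^ 2 < 1) :
    infDist z (span ℝ {u, v}) ^ 2 * (1 - ⟪u, v⟫ ^ 2) =
      1 - ⟪u, v⟫ ^ 2 - ⟪v, z⟫ ^ 2 - ⟪z, u⟫ ^ 2 + 2 * ⟪u, v⟫ * ⟪v, z⟫ * ⟪z, u⟫ := by
  have hd : 1 - ⟪u, v⟫ ^ 2 ≠ 0 := by linarith
  set q := ((⟪z, u⟫ - ⟪u, v⟫ * ⟪v, z⟫) / (1 - ⟪u, v⟫ ^ 2)) • u +
    ((⟪v, z⟫ - ⟪u, v⟫ * ⟪z, u⟫) / (1 - ⟪u, v⟫ ^ 2)) • v with hq_def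
  have hq : q ∈ span ℝ {u, v} := mem_span_pair.2 ⟨_, _, rfl⟩
  have hu' : ⟪z - q, u⟫ = 0 := by
    simp only [hq_def, inner_sub_left, inner_add_left, real_inner_smul_left,
      real_inner_self_eq_norm_sq, hu, real_inner_comm u v]
    field_simp
    ring
  have hv' : ⟪z - q, v⟫ = 0 := by
    simp only [hq_def, inner_sub_left, inner_add_left, real_inner_smul_left,
      real_inner_self_eq_norm_sq, hv, real_inner_comm v z]
    field_simp
    ring
  have horth : ∀ w ∈ span ℝ {u, v}, ⟪z - q, w⟫ = 0 := by
    intro w hw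
    obtain ⟨s, t, rfl⟩ := mem_span_pair.1 hw
    simp [inner_add_right, real_inner_smul_right, hu', hv']
  have hnorm : ‖z - q‖ ^ 2 = ⟪z - q, z⟫ := by
    rw [← real_inner_self_eq_norm_sq, inner_sub_right _ z q, horth _ hq, sub_zero]
  rw [infDist_eq_norm_sub_of_inner_eq_zero _ hq horth, hnorm]
  simp only [hq_def, inner_sub_left, inner_add_left, real_inner_smul_left,
    real_inner_self_eq_norm_sq, hz, real_inner_comm u z]
  field_simp
  ring

theorem infDist_span_pair_lt {u v z : E} (hu : ‖u‖ = 1) (hv : ‖v‖ = 1) (hz : ‖z‖ = 1)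
    (huv : ⟪u, v⟫ ^ 2 < 1) (hpos : 0 < infDist z (span ℝ {u, v}))
    (hzv : ⟪z, v⟫ ^ 2 < ⟪u, v⟫ ^ 2) :
    0 < infDist u (span ℝ {z, v}) ∧ infDist u (span ℝ {z, v}) < infDist z (span ℝ {u, v}) := by
  have hgram : infDist u (span ℝ {z, v}) ^ 2 * (1 - ⟪z, v⟫ ^ 2) =
      infDist z (span ℝ {u, v}) ^ 2 * (1 - ⟪u, v⟫ ^ 2) := by
    rw [infDist_span_pair_sq_mul hu hv hz huv, infDist_span_pair_sq_mul hz hv hu (hzv.trans huv),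
      real_inner_comm v u, real_inner_comm z v, real_inner_comm u z]
    ring
  have hsq : infDist u (span ℝ {z, v}) ^ 2 < infDist z (span ℝ {u, v}) ^ 2 := by
    nlinarith [pow_pos hpos 2]
  refine ⟨infDist_nonneg.lt_of_ne' fun h => ?_, lt_of_pow_lt_pow_left₀ 2 infDist_nonneg hsq⟩
  rw [h] at hgram
  nlinarith [pow_pos hpos 2]

theorem exists_inner_eq_add_of_finrank_eq_two {V : Submodule ℝ E} (hV : finrank ℝ V = 2) {e : E}
    (he : e ∈ V) (he₁ : ‖e‖ = 1) :
    ∃ f : E, ∀ x ∈ V, ∀ y ∈ V, ⟪x, y⟫ = ⟪e, x⟫ * ⟪e, y⟫ + ⟪f, x⟫ * ⟪f, y⟫ := by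
  have := Module.finite_of_finrank_eq_succ hV
  obtain ⟨b, hb⟩ := Orthonormal.exists_orthonormalBasis_extension_of_card_eq (𝕜 := ℝ)
    (ι := Fin 2) (by simpa using hV) (v := fun _ => (⟨e, he⟩ : V)) (s := {0}) (by
      rw [orthonormal_iff_ite]
      rintro ⟨i, rfl⟩ ⟨j, rfl⟩
      simp [he₁])
  refine ⟨b 1, fun x hx y hy => ?_⟩
  have h := b.sum_inner_mul_inner ⟨x, hx⟩ ⟨y, hy⟩
  rw [Fin.sum_univ_two, hb 0 rfl] at h
  simpa [real_inner_comm] using h.symm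

theorem inner_sq_eq_one_of_inner_eq_zero {V : Submodule ℝ E} (hV : finrank ℝ V = 2)
    {u v w : E} (hu : u ∈ V) (hv : v ∈ V) (hw : w ∈ V) (hu₁ : ‖u‖ = 1) (hv₁ : ‖v‖ = 1)
    (hw₁ : ‖w‖ = 1) (huv : ⟪u, v⟫ = 0) (hwv : ⟪w, v⟫ = 0) : ⟪u, w⟫ ^ 2 = 1 := by
  obtain ⟨f, hf⟩ := exists_inner_eq_add_of_finrank_eq_two hV hv hv₁
  have hfu : ⟪f, u⟫ ^ 2 = 1 := by
    have := hf u hu u hu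
    rw [real_inner_self_eq_norm_sq, hu₁, real_inner_comm u v, huv] at this
    linarith
  have hfw : ⟪f, w⟫ ^ 2 = 1 := by
    have := hf w hw w hw
    rw [real_inner_self_eq_norm_sq, hw₁, real_inner_comm w v, hwv] at this
    linarith
  rw [hf u hu w hw, real_inner_comm u v, huv, zero_mul, zero_add, mul_pow, hfu, hfw, one_mul]

theorem inner_ne_zero_of_forall_inner_sq_le {V : Submodule ℝ E} (hV : finrank ℝ V = 2) {P : E}
    (hP₁ : ‖P‖ < 1) {a : Fin 3 → E} (ha : ∀ i, a i ∈ V) (ha₁ : ∀ i, ‖a i‖ = 1)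
    (h : ∀ i j, i ≠ j → ⟪a i, a j⟫ ^ 2 ≤ ⟪P, a j⟫ ^ 2) (j : Fin 3) : ⟪P, a j⟫ ≠ 0 := by
  intro hj
  obtain ⟨i, k, hik, hij, hkj⟩ : ∃ i k : Fin 3, i ≠ k ∧ i ≠ j ∧ k ≠ j := by
    fin_cases j <;> decide
  have hij' : ⟪a i, a j⟫ = 0 := by nlinarith [h i j hij]
  have hkj' : ⟪a k, a j⟫ = 0 := by nlinarith [h k j hkj]
  have hik' := inner_sq_eq_one_of_inner_eq_zero hV (ha i) (ha j) (ha k) (ha₁ i) (ha₁ j) (ha₁ k)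
    hij' hkj'
  have hPk : |⟪P, a k⟫| < 1 := by
    have := abs_real_inner_le_norm P (a k)
    rw [ha₁ k, mul_one] at this
    linarith
  nlinarith [h i k hik, sq_abs ⟪P, a k⟫, abs_nonneg ⟪P, a k⟫]

theorem exists_inner_sq_lt_of_norm_lt_one {V : Submodule ℝ E} (hV : finrank ℝ V = 2) {P : E}
    (hP : P ∈ V) (hP₁ : ‖P‖ < 1) {a : Fin 3 → E} (ha : ∀ i, a i ∈ V) (ha₁ : ∀ i, ‖a i‖ = 1) :
    ∃ i j, i ≠ j ∧ ⟪P, a j⟫ ^ 2 < ⟪a i, a j⟫ ^ 2 := by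
  by_contra! h
  have hPa := inner_ne_zero_of_forall_inner_sq_le hV hP₁ ha ha₁ h
  have hP₀ : P ≠ 0 := fun h₀ => hPa 0 (by simp [h₀])
  set e := ‖P‖⁻¹ • P with he_def
  have hPe : ∀ x, ⟪P, x⟫ = ‖P‖ * ⟪e, x⟫ := by
    intro x
    rw [he_def, real_inner_smul_left, mul_inv_cancel_left₀ (norm_ne_zero_iff.2 hP₀)]
  obtain ⟨f, hf⟩ := exists_inner_eq_add_of_finrank_eq_two hV (e := e) (V.smul_mem _ hP)
    (norm_smul_inv_norm hP₀)
  have ha₂ : ∀ i, ⟪e, a i⟫ ^ 2 + ⟪f, a i⟫ ^ 2 = 1 := by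
    intro i
    have := hf _ (ha i) _ (ha i)
    rw [real_inner_self_eq_norm_sq, ha₁ i] at this
    linarith
  -- The sign of `⟪e, a i⟫ * ⟪f, a i⟫` tells on which side of the line `ℝ ∙ e` the line
  -- `ℝ ∙ a i` lies; two of the three lines lie on the same side.
  obtain ⟨i, j, hij, hside⟩ := exists_ne_mul_nonneg fun i => ⟪e, a i⟫ * ⟪f, a i⟫
  wlog hle : ⟪e, a j⟫ ^ 2 ≤ ⟪e, a i⟫ ^ 2 generalizing i j
  · exact this j i hij.symm (by rwa [mul_comm]) (le_of_not_ge hle)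
  have hlow := sq_le_mul_add_mul_sq_of_same_side (ha₂ i) (ha₂ j) hside hle
  rw [← hf _ (ha i) _ (ha j)] at hlow
  have hej : 0 < ⟪e, a j⟫ ^ 2 := by
    have := hPa j
    rw [hPe] at this
    positivity [right_ne_zero_of_mul this]
  have hP₂ : ‖P‖ ^ 2 < 1 := by nlinarith [norm_nonneg P]
  refine lt_irrefl _ (calc
    ⟪e, a j⟫ ^ 2 ≤ ⟪a i, a j⟫ ^ 2 := hlow
    _ ≤ ‖P‖ ^ 2 * ⟪e, a j⟫ ^ 2 := by rw [← mul_pow, ← hPe]; exact h i j hij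
    _ < ⟪e, a j⟫ ^ 2 := by nlinarith)

theorem exists_inner_sq_lt_of_notMem {V : Submodule ℝ E} (hV : finrank ℝ V = 2) {z : E}
    (hz : ‖z‖ = 1) (hzV : z ∉ V) {a : Fin 3 → E} (ha : ∀ i, a i ∈ V) (ha₁ : ∀ i, ‖a i‖ = 1) :
    ∃ i j, i ≠ j ∧ ⟪z, a j⟫ ^ 2 < ⟪a i, a j⟫ ^ 2 := by
  have := Module.finite_of_finrank_eq_succ hV
  have hP₁ : ‖V.starProjection z‖ < 1 := hz ▸ (V.norm_starProjection_apply_le z).lt_of_ne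
    fun h => hzV ((V.mem_iff_norm_starProjection z).2 h)
  obtain ⟨i, j, hij, hlt⟩ :=
    exists_inner_sq_lt_of_norm_lt_one hV (V.starProjection_apply_mem z) hP₁ ha ha₁
  refine ⟨i, j, hij, ?_⟩
  rwa [inner_starProjection_left_eq_right, starProjection_eq_self_iff.2 (ha j)] at hlt

section SylvesterGallai

variable {Z : Finset (sphere (0 : E) 1)}
  (hanti : ∀ x ∈ Z, ∀ y ∈ Z, (y : E) ≠ -(x : E))
  (hcol : ∀ x ∈ Z, ∀ y ∈ Z, x ≠ y → ∃ w ∈ Z, w ≠ x ∧ w ≠ y ∧ (w : E) ∈ span ℝ {(x : E), (y : E)})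
include hanti

theorem inner_sq_lt_one_of_mem_of_ne {x y : sphere (0 : E) 1} (hx : x ∈ Z) (hy : y ∈ Z)
    (hxy : x ≠ y) : ⟪(x : E), y⟫ ^ 2 < 1 :=
  inner_sq_lt_one_of_ne_of_ne_neg (norm_eq_of_mem_sphere x) (norm_eq_of_mem_sphere y)
    (Subtype.coe_ne_coe.2 hxy) (hanti y hy x hx)

theorem linearIndependent_pair_of_mem_of_ne {x y : sphere (0 : E) 1} (hx : x ∈ Z) (hy : y ∈ Z)
    (hxy : x ≠ y) : LinearIndependent ℝ ![(x : E), y] :=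
  linearIndependent_pair_of_inner_sq_lt_one (norm_eq_of_mem_sphere x) (norm_eq_of_mem_sphere y)
    (inner_sq_lt_one_of_mem_of_ne hanti hx hy hxy)

include hcol

theorem exists_infDist_span_pair_lt {x y z : sphere (0 : E) 1} (hx : x ∈ Z) (hy : y ∈ Z)
    (hxy : x ≠ y) (hpos : 0 < infDist (z : E) (span ℝ {(x : E), (y : E)})) :
    ∃ u ∈ Z, ∃ v ∈ Z, z ≠ v ∧ 0 < infDist (u : E) (span ℝ {(z : E), (v : E)}) ∧
      infDist (u : E) (span ℝ {(z : E), (v : E)}) <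
        infDist (z : E) (span ℝ {(x : E), (y : E)}) := by
  obtain ⟨w, hw, hwx, hwy, hwV⟩ := hcol x hx y hy hxy
  set V := span ℝ {(x : E), (y : E)}
  have hzV : (z : E) ∉ V := fun h => hpos.ne' (infDist_zero_of_mem h)
  let a : Fin 3 → sphere (0 : E) 1 := ![x, y, w]
  have haZ : ∀ i, a i ∈ Z := by
    intro i
    fin_cases i <;> assumption
  have haV : ∀ i, (a i : E) ∈ V := by
    intro i
    fin_cases i
    exacts [subset_span (mem_insert _ _), subset_span (mem_insert_of_mem _ rfl), hwV]
  have ha_ne : ∀ i j, i ≠ j → a i ≠ a j := by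
    intro i j hij
    fin_cases i <;> fin_cases j <;> simp [a, hxy, hwx, hwy, hxy.symm, hwx.symm, hwy.symm] at hij ⊢
  obtain ⟨i, j, hij, hlt⟩ :=
    exists_inner_sq_lt_of_notMem (finrank_span_pair_eq_two (linearIndependent_pair_of_mem_of_ne
      hanti hx hy hxy)) (norm_eq_of_mem_sphere z) hzV haV (fun i => norm_eq_of_mem_sphere (a i))
  have hspan : span ℝ {(a i : E), (a j : E)} = V := span_pair_eq_of_mem_span_pair
    (linearIndependent_pair_of_mem_of_ne hanti hx hy hxy)
    (linearIndependent_pair_of_mem_of_ne hanti (haZ i) (haZ j) (ha_ne i j hij)) (haV i) (haV j)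
  obtain ⟨hpos', hlt'⟩ := infDist_span_pair_lt (norm_eq_of_mem_sphere (a i))
    (norm_eq_of_mem_sphere (a j)) (norm_eq_of_mem_sphere z)
    (inner_sq_lt_one_of_mem_of_ne hanti (haZ i) (haZ j) (ha_ne i j hij)) (hspan ▸ hpos) hlt
  exact ⟨a i, haZ i, a j, haZ j, fun h => hzV (h ▸ haV j), hpos', hspan ▸ hlt'⟩

theorem mem_span_pair_of_sylvester_gallai {x y : sphere (0 : E) 1} (hx : x ∈ Z) (hy : y ∈ Z)
    (hxy : x ≠ y) {z : sphere (0 : E) 1} (hz : z ∈ Z) : (z : E) ∈ span ℝ {(x : E), (y : E)} := by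
  classical
  by_contra hzV
  let δ : sphere (0 : E) 1 × sphere (0 : E) 1 × sphere (0 : E) 1 → ℝ :=
    fun t => infDist (t.1 : E) (span ℝ {(t.2.1 : E), (t.2.2 : E)})
  let T := (Z ×ˢ Z ×ˢ Z).filter fun t => t.2.1 ≠ t.2.2 ∧ 0 < δ t
  have hpos : 0 < δ (z, x, y) := by
    have := FiniteDimensional.span_of_finite ℝ (toFinite {(x : E), (y : E)})
    exact ((span ℝ _).closed_of_finiteDimensional.notMem_iff_infDist_pos ⟨0, zero_mem _⟩).1 hzV
  obtain ⟨⟨z, x, y⟩, ht, hmin⟩ := T.exists_min_image δ ⟨(z, x, y), by simp [T, *]⟩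
  simp only [T, Finset.mem_filter, Finset.mem_product] at ht
  obtain ⟨⟨hz, hx, hy⟩, hxy, hpos⟩ := ht
  obtain ⟨u, hu, v, hv, hzv, hpos', hlt⟩ := exists_infDist_span_pair_lt hanti hcol hx hy hxy hpos
  exact (hmin (u, z, v) (by simp [T, δ, *])).not_gt hlt

theorem exists_finrank_eq_two_of_sylvester_gallai (hE : 1 < finrank ℝ E) :
    ∃ V : Submodule ℝ E, finrank ℝ V = 2 ∧ ∀ w ∈ Z, (w : E) ∈ V := by
  by_cases hpair : ∃ x ∈ Z, ∃ y ∈ Z, x ≠ y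
  · obtain ⟨x, hx, y, hy, hxy⟩ := hpair
    exact ⟨_, finrank_span_pair_eq_two (linearIndependent_pair_of_mem_of_ne hanti hx hy hxy),
      fun w hw => mem_span_pair_of_sylvester_gallai hanti hcol hx hy hxy hw⟩
  · push Not at hpair
    obtain ⟨e, he, hZe⟩ : ∃ e : E, e ≠ 0 ∧ ∀ w ∈ Z, (w : E) = e := by
      rcases Z.eq_empty_or_nonempty with rfl | ⟨z, hz⟩
      · have := Module.nontrivial_of_finrank_pos (R := ℝ) (M := E) (by omega)
        obtain ⟨e, he⟩ := exists_ne (0 : E)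
        exact ⟨e, he, by simp⟩
      · exact ⟨z, ne_zero_of_mem_unit_sphere z, fun w hw => congrArg _ (hpair w hw z hz)⟩
    obtain ⟨V, hV, heV⟩ := exists_finrank_eq_two_of_mem hE he
    exact ⟨V, hV, fun w hw => hZe w hw ▸ heV⟩

end SylvesterGallai

end

/-- **Spherical Sylvester–Gallai theorem**: if a finite set of points on `S^d` (`d ≥ 2`) contains
no pair of antipodal points, and for every two distinct points of the set the great circle through
them (the intersection of the sphere with the linear span of the two points) contains a third
point of the set, then all points lie on one great circle. -/
theorem spherical_sylvester_gallai (d : ℕ) (hd : 2 ≤ d) (Z : Finset (Sphere d))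
    (hanti : ∀ x ∈ Z, ∀ y ∈ Z,
      (y : EuclideanSpace ℝ (Fin (d + 1))) ≠ -(x : EuclideanSpace ℝ (Fin (d + 1))))
    (hcol : ∀ x ∈ Z, ∀ y ∈ Z, x ≠ y → ∃ w ∈ Z, w ≠ x ∧ w ≠ y ∧
      (w : EuclideanSpace ℝ (Fin (d + 1))) ∈ Submodule.span ℝ
        ({(x : EuclideanSpace ℝ (Fin (d + 1))), (y : EuclideanSpace ℝ (Fin (d + 1)))} :
          Set (EuclideanSpace ℝ (Fin (d + 1))))) :
    ∃ V : Submodule ℝ (EuclideanSpace ℝ (Fin (d + 1))), Module.finrank ℝ V = 2 ∧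
      ∀ w ∈ Z, (w : EuclideanSpace ℝ (Fin (d + 1))) ∈ V :=
  exists_finrank_eq_two_of_sylvester_gallai hanti hcol (by rw [finrank_euclideanSpace_fin]; omega)
end
end

section
/- Let d ≥ 1 and F ∈ C[−1,1]. Then F is positive definite on S^d if and only if for every pair of finite Borel measures μ, ν on S^d one has I_F(μ) + I_F(ν) ≥ 2 ∬_{S^d×S^d} F(x·y) dμ(x)dν(y) (equivalently, the energy of every finite signed Borel measure μ − ν on S^d is non-negative). -/
/-!
For finitely supported measures `μ = ∑ cᵢ⁺ δ_{zᵢ}`, `ν = ∑ cᵢ⁻ δ_{zᵢ}` the energy inequality is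
exactly the inequality `∑ᵢⱼ F(zᵢ·zⱼ) cᵢ cⱼ ≥ 0`, which gives one direction. For the other, the
kernel `K(x, y) = F(x·y)` is uniformly continuous on the compact space `S^d × S^d`, so snapping
points to a finite `η`-net by a measurable nearest-point map `π` changes `K` by at most `ε`
everywhere. The energy of `μ - ν` for the snapped kernel is the quadratic form
`∑ᵢⱼ K(wᵢ, wⱼ) cᵢ cⱼ` with `cᵢ = μ(π⁻¹ i) - ν(π⁻¹ i)`, hence nonnegative, and the energies of
the two kernels differ by at most `ε (μ(S^d) + ν(S^d))²`.
-/

open MeasureTheory Metric Set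
open scoped RealInnerProductSpace ENNReal

noncomputable section

open Function

section Kernel

variable {X Y ι : Type*} [MeasurableSpace X]

def IsPosDefKernel (K : Y → Y → ℝ) : Prop :=
  ∀ (N : ℕ) (z : Fin N → Y) (c : Fin N → ℝ), 0 ≤ ∑ i, ∑ j, K (z i) (z j) * c i * c j

lemma sum_sum_mul_sub_mul_sub [Fintype ι] {A : ι → ι → ℝ} (hA : ∀ i j, A i j = A j i)
    (p q : ι → ℝ) :
    ∑ i, ∑ j, A i j * (p i - q i) * (p j - q j)
      = ∑ i, ∑ j, A i j * p i * p j + ∑ i, ∑ j, A i j * q i * q j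
        - 2 * ∑ i, ∑ j, A i j * p i * q j := by
  have hswap : ∑ i, ∑ j, A i j * q i * p j = ∑ i, ∑ j, A i j * p i * q j := by
    rw [Finset.sum_comm]
    exact Finset.sum_congr rfl fun i _ => Finset.sum_congr rfl fun j _ => by rw [hA]; ring
  calc ∑ i, ∑ j, A i j * (p i - q i) * (p j - q j)
      = ∑ i, ∑ j, (A i j * p i * p j + A i j * q i * q j - A i j * p i * q j
          - A i j * q i * p j) :=
        Finset.sum_congr rfl fun i _ => Finset.sum_congr rfl fun j _ => by ring
    _ = _ := by simp only [Finset.sum_sub_distrib, Finset.sum_add_distrib, hswap]; ring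

def mutualEnergy (K : X → X → ℝ) (μ ν : Measure X) : ℝ := ∫ x, ∫ y, K x y ∂ν ∂μ

def HasNonnegSignedEnergy (K : X → X → ℝ) : Prop :=
  ∀ μ ν : Measure X, IsFiniteMeasure μ → IsFiniteMeasure ν →
    2 * mutualEnergy K μ ν ≤ mutualEnergy K μ μ + mutualEnergy K ν ν

lemma mutualEnergy_map [MeasurableSpace Y] {K : Y → Y → ℝ} (hK : StronglyMeasurable (uncurry K))
    {π : X → Y} (hπ : Measurable π) (μ ν : Measure X) [SFinite ν] :
    mutualEnergy K (μ.map π) (ν.map π) = mutualEnergy (fun x y => K (π x) (π y)) μ ν := by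
  calc mutualEnergy K (μ.map π) (ν.map π) = ∫ x, ∫ y, K (π x) y ∂(ν.map π) ∂μ :=
        integral_map hπ.aemeasurable
          (hK.integral_prod_right' (ν := ν.map π)).aestronglyMeasurable
    _ = mutualEnergy (fun x y => K (π x) (π y)) μ ν :=
        integral_congr_ae <| ae_of_all _ fun x => integral_map hπ.aemeasurable
          (hK.comp_measurable measurable_prodMk_left).aestronglyMeasurable

lemma mutualEnergy_fintype [Fintype ι] [MeasurableSpace ι] [MeasurableSingletonClass ι]
    (k : ι → ι → ℝ) (μ ν : Measure ι) [IsFiniteMeasure μ] [IsFiniteMeasure ν] :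
    mutualEnergy k μ ν = ∑ i, ∑ j, k i j * μ.real {i} * ν.real {j} := by
  simp only [mutualEnergy, integral_fintype Integrable.of_finite, smul_eq_mul, Finset.mul_sum]
  exact Finset.sum_congr rfl fun i _ => Finset.sum_congr rfl fun j _ => by ring

lemma mutualEnergy_eq_integral_prod {K : X → X → ℝ} {μ ν : Measure X} [SFinite μ] [SFinite ν]
    (hK : Integrable (uncurry K) (μ.prod ν)) :
    mutualEnergy K μ ν = ∫ p, uncurry K p ∂(μ.prod ν) :=
  (integral_prod _ hK).symm

lemma abs_mutualEnergy_sub_le {K K' : X → X → ℝ} {μ ν : Measure X} [IsFiniteMeasure μ]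
    [IsFiniteMeasure ν] (hK : Integrable (uncurry K) (μ.prod ν))
    (hK' : Integrable (uncurry K') (μ.prod ν)) {ε : ℝ} (hε : ∀ x y, |K x y - K' x y| ≤ ε) :
    |mutualEnergy K μ ν - mutualEnergy K' μ ν| ≤ ε * (μ.real univ * ν.real univ) := by
  rw [mutualEnergy_eq_integral_prod hK, mutualEnergy_eq_integral_prod hK',
    ← integral_sub hK hK', ← measureReal_prod_prod, univ_prod_univ, ← Real.norm_eq_abs]
  exact norm_integral_le_of_norm_le_const
    (ae_of_all _ fun p => (Real.norm_eq_abs _).trans_le (hε p.1 p.2))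

lemma IsPosDefKernel.hasNonnegSignedEnergy_comp {K : Y → Y → ℝ} (hK : IsPosDefKernel K)
    (hsym : ∀ x y, K x y = K y x) {n : ℕ} {π : X → Fin n} (hπ : Measurable π) (w : Fin n → Y) :
    HasNonnegSignedEnergy fun x y => K (w (π x)) (w (π y)) := by
  intro μ ν _ _
  have hk : StronglyMeasurable (uncurry fun i j : Fin n => K (w i) (w j)) := .of_discrete
  simp only [← mutualEnergy_map hk hπ, mutualEnergy_fintype]
  have hQ := hK n w fun i => (μ.map π).real {i} - (ν.map π).real {i}
  rw [sum_sum_mul_sub_mul_sub fun i j => hsym (w i) (w j)] at hQ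
  linarith

lemma HasNonnegSignedEnergy.isPosDefKernel {K : X → X → ℝ} (hK : StronglyMeasurable (uncurry K))
    (hsym : ∀ x y, K x y = K y x) (h : HasNonnegSignedEnergy K) : IsPosDefKernel K := by
  intro N z c
  let weights (p : Fin N → ℝ) : Measure (Fin N) := ∑ i, (p i).toNNReal • Measure.dirac i
  have real_weights (p : Fin N → ℝ) (hp : ∀ i, 0 ≤ p i) (i : Fin N) :
      (weights p).real {i} = p i := by
    simp [weights, measureReal_def, Pi.single_apply, hp i]
  let p i := max (c i) 0
  let q i := max (-c i) 0
  have hc : c = fun i => p i - q i :=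
    funext fun i => (max_zero_sub_max_neg_zero_eq_self (c i)).symm
  have hE := h ((weights p).map z) ((weights q).map z) inferInstance inferInstance
  simp only [mutualEnergy_map hK Measurable.of_discrete, mutualEnergy_fintype,
    real_weights p (fun i => le_max_right _ _), real_weights q (fun i => le_max_right _ _)] at hE
  rw [hc, sum_sum_mul_sub_mul_sub fun i j => hsym (z i) (z j)]
  linarith

variable [MetricSpace X] [CompactSpace X] [BorelSpace X]

lemma exists_measurable_fin_dist_lt {δ : ℝ} (hδ : 0 < δ) :
    ∃ (n : ℕ) (π : X → Fin n) (w : Fin n → X), Measurable π ∧ ∀ x, dist (w (π x)) x < δ := by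
  rcases isEmpty_or_nonempty X with _ | _
  · exact ⟨0, isEmptyElim, Fin.elim0, Subsingleton.measurable, isEmptyElim⟩
  set e := TopologicalSpace.denseSeq X
  obtain ⟨t, ht⟩ := isCompact_univ.elim_finite_subcover (fun k => ball (e k) δ)
    (fun _ => isOpen_ball) fun x _ => mem_iUnion.mpr <|
      ((TopologicalSpace.denseRange_denseSeq X).exists_dist_lt x hδ)
  set N := t.sup id
  refine ⟨N + 1, fun x => Fin.ofNat (N + 1) (SimpleFunc.nearestPtInd e N x), fun i => e i,
    (measurable_from_nat (f := Fin.ofNat (N + 1))).comp (SimpleFunc.measurable _), fun x => ?_⟩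
  obtain ⟨k, hkt, hk⟩ := mem_iUnion₂.mp (ht (mem_univ x))
  have hind : (Fin.ofNat (N + 1) (SimpleFunc.nearestPtInd e N x) : ℕ)
      = SimpleFunc.nearestPtInd e N x := by
    rw [Fin.val_ofNat, Nat.mod_eq_of_lt (Nat.lt_succ_of_le (SimpleFunc.nearestPtInd_le _ _ _))]
  dsimp only
  rw [hind, ← edist_lt_ofReal]
  exact (SimpleFunc.edist_nearestPt_le e x (Finset.le_sup (f := id) hkt)).trans_lt
    (edist_lt_ofReal.mpr (mem_ball'.mp hk))

theorem IsPosDefKernel.hasNonnegSignedEnergy {K : X → X → ℝ} (hK : Continuous (uncurry K))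
    (hsym : ∀ x y, K x y = K y x) (hpos : IsPosDefKernel K) : HasNonnegSignedEnergy K := by
  intro μ ν _ _
  set a := μ.real univ
  set b := ν.real univ
  refine le_of_forall_pos_le_add fun ε hε => ?_
  set δ := ε / ((a + b) ^ 2 + 1)
  obtain ⟨η, hη, hKη⟩ := Metric.uniformContinuous_iff.mp
    (CompactSpace.uniformContinuous_of_continuous hK) δ (by positivity)
  obtain ⟨n, π, w, hπ, hw⟩ := exists_measurable_fin_dist_lt (X := X) hη
  set K' : X → X → ℝ := fun x y => K (w (π x)) (w (π y))
  have hclose (x y : X) : |K x y - K' x y| ≤ δ := by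
    rw [← Real.dist_eq]
    refine (hKη (a := (x, y)) (b := (w (π x), w (π y))) ?_).le
    rw [Prod.dist_eq, dist_comm x, dist_comm y]
    exact max_lt (hw x) (hw y)
  have hKint (α β : Measure X) [IsFiniteMeasure α] [IsFiniteMeasure β] :
      Integrable (uncurry K) (α.prod β) :=
    (BoundedContinuousFunction.mkOfCompact ⟨_, hK⟩).integrable _
  have hK'int (α β : Measure X) [IsFiniteMeasure α] [IsFiniteMeasure β] :
      Integrable (uncurry K') (α.prod β) :=
    Integrable.of_finite.comp_measurable (g := uncurry fun i j => K (w i) (w j))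
      (hπ.prodMap hπ)
  have hK' := hpos.hasNonnegSignedEnergy_comp hsym hπ w μ ν ‹_› ‹_›
  have hμν := abs_le.mp (abs_mutualEnergy_sub_le (hKint μ ν) (hK'int μ ν) hclose)
  have hμμ := abs_le.mp (abs_mutualEnergy_sub_le (hKint μ μ) (hK'int μ μ) hclose)
  have hνν := abs_le.mp (abs_mutualEnergy_sub_le (hKint ν ν) (hK'int ν ν) hclose)
  have hδ : δ * (a * a) + δ * (b * b) + 2 * (δ * (a * b)) ≤ ε :=
    calc δ * (a * a) + δ * (b * b) + 2 * (δ * (a * b))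
        = ε * ((a + b) ^ 2 / ((a + b) ^ 2 + 1)) := by ring
      _ ≤ ε * 1 := by gcongr; exact div_le_one_of_le₀ (by linarith) (by positivity)
      _ = ε := mul_one ε
  linarith

theorem isPosDefKernel_iff_hasNonnegSignedEnergy {K : X → X → ℝ} (hK : Continuous (uncurry K))
    (hsym : ∀ x y, K x y = K y x) : IsPosDefKernel K ↔ HasNonnegSignedEnergy K :=
  ⟨fun h => h.hasNonnegSignedEnergy hK hsym, fun h => h.isPosDefKernel hK.stronglyMeasurable hsym⟩

end Kernel

lemma continuous_uncurry_ip (d : ℕ) : Continuous (uncurry (ip (d := d))) :=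
  continuous_subtype_val.fst'.inner continuous_subtype_val.snd'

lemma ip_mem_Icc {d : ℕ} (x y : Sphere d) : ip x y ∈ Icc (-1 : ℝ) 1 := by
  have h := abs_real_inner_le_norm (x : EuclideanSpace ℝ (Fin (d + 1))) y
  rw [norm_eq_of_mem_sphere x, norm_eq_of_mem_sphere y, mul_one] at h
  exact abs_le.mp h

theorem positive_definite_iff_signed_energy_nonneg_general (d : ℕ)
    (F : ℝ → ℝ) (hF : ContinuousOn F (Set.Icc (-1 : ℝ) 1)) :
    (∀ (N : ℕ) (z : Fin N → Sphere d) (c : Fin N → ℝ),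
        0 ≤ ∑ i, ∑ j, F (ip (z i) (z j)) * c i * c j)
    ↔ (∀ μ ν : Measure (Sphere d), IsFiniteMeasure μ → IsFiniteMeasure ν →
        2 * (∫ x, ∫ y, F (ip x y) ∂ν ∂μ)
          ≤ (∫ x, ∫ y, F (ip x y) ∂μ ∂μ) + (∫ x, ∫ y, F (ip x y) ∂ν ∂ν)) :=
  isPosDefKernel_iff_hasNonnegSignedEnergy (K := fun x y => F (ip x y))
    (hF.comp_continuous (continuous_uncurry_ip d) fun p => ip_mem_Icc p.1 p.2)
    fun _ _ => congrArg F (real_inner_comm _ _)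

/-- A continuous function `F` on `[-1,1]` is positive definite on `S^d` if and only if for every
pair of finite Borel measures `μ, ν` on `S^d` one has
`2 ∬ F(x·y) dμ dν ≤ I_F(μ) + I_F(ν)`, i.e. the energy of every finite signed measure `μ - ν`
is non-negative. -/
theorem positive_definite_iff_signed_energy_nonneg (d : ℕ) (hd : 1 ≤ d)
    (F : ℝ → ℝ) (hF : ContinuousOn F (Set.Icc (-1 : ℝ) 1)) :
    (∀ (N : ℕ) (z : Fin N → Sphere d) (c : Fin N → ℝ),
        0 ≤ ∑ i, ∑ j, F (ip (z i) (z j)) * c i * c j)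
    ↔ (∀ μ ν : Measure (Sphere d), IsFiniteMeasure μ → IsFiniteMeasure ν →
        2 * (∫ x, ∫ y, F (ip x y) ∂ν ∂μ)
          ≤ (∫ x, ∫ y, F (ip x y) ∂μ ∂μ) + (∫ x, ∫ y, F (ip x y) ∂ν ∂ν)) :=
  positive_definite_iff_signed_energy_nonneg_general d F hF
end
end

section
/- (Generalized Stolarsky principle) Let d ≥ 1, let f : [−1,1] → ℝ be Borel measurable with ∫_{S^d} f(x·z)² dσ(z) < ∞ for x ∈ S^d, and let F : [−1,1] → ℝ be such that F(x·y) = ∫_{S^d} f(x·z) f(z·y) dσ(z) for all x, y ∈ S^d. Then for every Borel probability measure μ on S^d, I_F(μ) − I_F(σ) = D²_{L²,f}(μ), where D²_{L²,f}(μ) = ∫_{S^d} | ∫_{S^d} f(x·y) dμ(y) − ∫_{S^d} f(x·y) dσ(y) |² dσ(x). In particular, for μ = (1/N) Σ_{i=1}^N δ_{z_i}, (1/N²) Σ_{i,j=1}^N F(z_i·z_j) − ∬_{S^d×S^d} F(x·y) dσ(x)dσ(y) = ∫_{S^d} | (1/N) Σ_{i=1}^N f(x·z_i) − ∫_{S^d}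 f(x·y) dσ(y) |² dσ(x). -/
open MeasureTheory Metric Set
open scoped RealInnerProductSpace ENNReal

noncomputable section

/-!
Write `U_μ(x) = ∫ f(x·y) dμ(y)` for the potential of `μ`. Two applications of Fubini give
`I_F(μ) = ∫ U_μ² dσ`. Rotation invariance of `σ` makes `U_σ` a constant `c`, and Fubini once more
gives `∫ U_μ dσ = c`. Hence `D²(μ) = ∫ (U_μ - c)² dσ` is the variance of `U_μ` under `σ`, that is
`∫ U_μ² dσ - c² = I_F(μ) - I_F(σ)`. The Fubini exchanges are justified because the rows
`f(x · ·)` are uniformly bounded in `L²(σ)` (rotation invariance again), using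
`|ab| ≤ (a² + b²)/2` and Jensen's inequality `U_μ(x)² ≤ ∫ f(x·y)² dμ(y)`.
-/

open Function

section SymmetricKernel

variable {X : Type*} [MeasurableSpace X] {σ μ : Measure X} {k K : X → X → ℝ}

def kernelPotential (k : X → X → ℝ) (μ : Measure X) (x : X) : ℝ := ∫ y, k x y ∂μ

def kernelEnergy (K : X → X → ℝ) (μ : Measure X) : ℝ := ∫ x, ∫ y, K x y ∂μ ∂μ

structure IsSymmetricL2Kernel (σ : Measure X) (k : X → X → ℝ) : Prop where
  measurable : Measurable (uncurry k)
  symm : ∀ x y, k x y = k y x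
  integrable_sq : ∀ x, Integrable (fun w => k x w ^ 2) σ
  bddAbove_integral_sq : BddAbove (range fun x => ∫ w, k x w ^ 2 ∂σ)

lemma sq_integral_le_integral_sq [IsProbabilityMeasure μ] {h : X → ℝ}
    (hm : AEStronglyMeasurable h μ) (h2 : Integrable (fun x => h x ^ 2) μ) :
    (∫ x, h x ∂μ) ^ 2 ≤ ∫ x, h x ^ 2 ∂μ := by
  have := ProbabilityTheory.variance_nonneg h μ
  rw [ProbabilityTheory.variance_eq_sub ((memLp_two_iff_integrable_sq hm).2 h2)] at this
  simpa using this

lemma stronglyMeasurable_kernelPotential [SFinite μ] (hk : Measurable (uncurry k)) :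
    StronglyMeasurable (kernelPotential k μ) :=
  hk.stronglyMeasurable.integral_prod_right

namespace IsSymmetricL2Kernel

lemma integrable_prod_sq [IsFiniteMeasure μ] [SFinite σ] (hk : IsSymmetricL2Kernel σ k) :
    Integrable (fun p : X × X => k p.1 p.2 ^ 2) (μ.prod σ) := by
  obtain ⟨C, hC⟩ := hk.bddAbove_integral_sq
  have hm : Measurable fun p : X × X => k p.1 p.2 ^ 2 := hk.measurable.pow_const 2
  refine (integrable_prod_iff hm.aestronglyMeasurable).2 ⟨ae_of_all _ hk.integrable_sq, ?_⟩
  refine .of_bound hm.norm.stronglyMeasurable.integral_prod_right'.aestronglyMeasurable C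
    (ae_of_all _ fun x => ?_)
  simp only [Real.norm_eq_abs, abs_pow, sq_abs]
  rw [abs_of_nonneg (integral_nonneg fun w => sq_nonneg (k x w))]
  exact hC ⟨x, rfl⟩

lemma integrable_prod_mul [IsFiniteMeasure μ] [IsFiniteMeasure σ]
    (hk : IsSymmetricL2Kernel σ k) {a : X → ℝ} (ha : AEStronglyMeasurable a σ)
    (ha2 : Integrable (fun w => a w ^ 2) σ) :
    Integrable (fun p : X × X => a p.2 * k p.2 p.1) (μ.prod σ) := by
  refine (((ha2.comp_snd μ).add hk.integrable_prod_sq).div_const 2).mono'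
    (ha.comp_snd.mul (hk.measurable.comp measurable_swap).aestronglyMeasurable)
    (ae_of_all _ fun p => ?_)
  change |a p.2 * k p.2 p.1| ≤ (a p.2 ^ 2 + k p.1 p.2 ^ 2) / 2
  rw [abs_mul, hk.symm p.2 p.1]
  nlinarith [two_mul_le_add_sq |a p.2| |k p.1 p.2|, sq_abs (a p.2), sq_abs (k p.1 p.2)]

lemma integral_integral_mul [IsFiniteMeasure μ] [IsFiniteMeasure σ]
    (hk : IsSymmetricL2Kernel σ k) {a : X → ℝ} (ha : AEStronglyMeasurable a σ)
    (ha2 : Integrable (fun w => a w ^ 2) σ) :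
    ∫ y, ∫ w, a w * k w y ∂σ ∂μ = ∫ w, a w * kernelPotential k μ w ∂σ := by
  rw [integral_integral_swap (hk.integrable_prod_mul ha ha2)]
  simp only [kernelPotential, integral_const_mul]

lemma integrable_kernelPotential_sq [IsProbabilityMeasure μ] [IsFiniteMeasure σ]
    (hk : IsSymmetricL2Kernel σ k) : Integrable (fun w => kernelPotential k μ w ^ 2) σ := by
  have hprod : Integrable (fun p : X × X => k p.1 p.2 ^ 2) (σ.prod μ) := by
    refine (hk.integrable_prod_sq (μ := μ)).swap.congr (ae_of_all _ fun p => ?_)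
    simp only [comp_apply, Prod.fst_swap, Prod.snd_swap, hk.symm p.2 p.1]
  refine hprod.integral_prod_left.mono'
    ((stronglyMeasurable_kernelPotential hk.measurable).aestronglyMeasurable.pow 2) ?_
  filter_upwards [hprod.prod_right_ae] with w hw
  rw [Real.norm_eq_abs, abs_of_nonneg (sq_nonneg _)]
  exact sq_integral_le_integral_sq
    (hk.measurable.comp measurable_prodMk_left).aestronglyMeasurable hw

lemma kernelEnergy_eq_integral_kernelPotential_sq [IsProbabilityMeasure μ] [IsFiniteMeasure σ]
    (hk : IsSymmetricL2Kernel σ k) (hK : ∀ x y, K x y = ∫ w, k x w * k w y ∂σ) :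
    kernelEnergy K μ = ∫ w, kernelPotential k μ w ^ 2 ∂σ := by
  have hg : AEStronglyMeasurable (kernelPotential k μ) σ :=
    (stronglyMeasurable_kernelPotential hk.measurable).aestronglyMeasurable
  calc kernelEnergy K μ = ∫ x, ∫ w, k x w * kernelPotential k μ w ∂σ ∂μ :=
        integral_congr_ae (ae_of_all _ fun x => by
          simp only [hK]
          exact hk.integral_integral_mul
            (hk.measurable.comp measurable_prodMk_left).aestronglyMeasurable (hk.integrable_sq x))
    _ = ∫ x, ∫ w, kernelPotential k μ w * k w x ∂σ ∂μ :=
        integral_congr_ae (ae_of_all _ fun x => by simp only [mul_comm (k _ _), hk.symm x])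
    _ = ∫ w, kernelPotential k μ w * kernelPotential k μ w ∂σ :=
        hk.integral_integral_mul hg hk.integrable_kernelPotential_sq
    _ = ∫ w, kernelPotential k μ w ^ 2 ∂σ := by simp_rw [sq]

lemma integral_kernelPotential [IsProbabilityMeasure μ] [IsFiniteMeasure σ]
    (hk : IsSymmetricL2Kernel σ k) {c : ℝ} (hc : ∀ x, kernelPotential k σ x = c) :
    ∫ w, kernelPotential k μ w ∂σ = c := by
  have h := hk.integral_integral_mul (μ := μ) (aestronglyMeasurable_const (b := (1 : ℝ)))
    (integrable_const _)
  simp only [one_mul] at h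
  calc ∫ w, kernelPotential k μ w ∂σ = ∫ y, ∫ w, k w y ∂σ ∂μ := h.symm
    _ = ∫ y, kernelPotential k σ y ∂μ :=
      integral_congr_ae (ae_of_all _ fun y => by simp only [kernelPotential, hk.symm _ y])
    _ = c := by simp [hc]

theorem kernelEnergy_sub_kernelEnergy [IsProbabilityMeasure μ] [IsProbabilityMeasure σ]
    (hk : IsSymmetricL2Kernel σ k) (hK : ∀ x y, K x y = ∫ w, k x w * k w y ∂σ) {c : ℝ}
    (hc : ∀ x, kernelPotential k σ x = c) :
    kernelEnergy K μ - kernelEnergy K σ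
      = ∫ x, |kernelPotential k μ x - kernelPotential k σ x| ^ 2 ∂σ := by
  have hg : AEStronglyMeasurable (kernelPotential k μ) σ :=
    (stronglyMeasurable_kernelPotential hk.measurable).aestronglyMeasurable
  have hσ : kernelEnergy K σ = c ^ 2 := by
    rw [hk.kernelEnergy_eq_integral_kernelPotential_sq hK]
    simp [hc]
  have hvar := ProbabilityTheory.variance_eq_sub
    ((memLp_two_iff_integrable_sq hg).2 (hk.integrable_kernelPotential_sq (μ := μ)))
  rw [ProbabilityTheory.variance_eq_integral hg.aemeasurable] at hvar
  simp only [hk.integral_kernelPotential hc, Pi.pow_apply] at hvar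
  rw [hk.kernelEnergy_eq_integral_kernelPotential_sq hK, hσ, ← hvar]
  simp only [hc, sq_abs]

end IsSymmetricL2Kernel

end SymmetricKernel

section EmpiricalMeasure

variable {X ι : Type*} [MeasurableSpace X] [Fintype ι]

def empiricalMeasure (z : ι → X) : Measure X :=
  (Fintype.card ι : ℝ≥0∞)⁻¹ • ∑ i, Measure.dirac (z i)

instance [Nonempty ι] (z : ι → X) : IsProbabilityMeasure (empiricalMeasure z) := by
  constructor
  simp [empiricalMeasure, ENNReal.inv_mul_cancel]

lemma integral_empiricalMeasure [MeasurableSingletonClass X] (z : ι → X) (h : X → ℝ) :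
    ∫ x, h x ∂(empiricalMeasure z) = (Fintype.card ι : ℝ)⁻¹ * ∑ i, h (z i) := by
  rw [empiricalMeasure, integral_smul_measure,
    integral_finsetSum_measure fun i _ => integrable_dirac enorm_lt_top]
  simp [integral_dirac]

lemma kernelEnergy_empiricalMeasure [MeasurableSingletonClass X] (z : ι → X)
    (K : X → X → ℝ) :
    kernelEnergy K (empiricalMeasure z)
      = ((Fintype.card ι : ℝ) ^ 2)⁻¹ * ∑ i, ∑ j, K (z i) (z j) := by
  simp only [kernelEnergy, integral_empiricalMeasure, Finset.mul_sum]
  congr! 2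
  ring

end EmpiricalMeasure

open scoped Pointwise

section UnitSphere

variable {E : Type*} [NormedAddCommGroup E] [NormedSpace ℝ E]

def LinearIsometryEquiv.unitSphereHomeomorph (A : E ≃ₗᵢ[ℝ] E) :
    sphere (0 : E) 1 ≃ₜ sphere (0 : E) 1 :=
  A.toHomeomorph.subtype fun x => by simp

@[simp]
lemma LinearIsometryEquiv.coe_unitSphereHomeomorph (A : E ≃ₗᵢ[ℝ] E) (x : sphere (0 : E) 1) :
    (A.unitSphereHomeomorph x : E) = A x :=
  rfl

lemma MeasureTheory.Measure.map_toSphere_unitSphereHomeomorph [MeasurableSpace E]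
    [BorelSpace E] {μ : Measure E} {A : E ≃ₗᵢ[ℝ] E} (hA : MeasurePreserving A μ μ) :
    μ.toSphere.map A.unitSphereHomeomorph = μ.toSphere := by
  ext s hs
  rw [Measure.map_apply A.unitSphereHomeomorph.continuous.measurable hs,
    μ.toSphere_apply' (A.unitSphereHomeomorph.continuous.measurable hs), μ.toSphere_apply' hs,
    ← Homeomorph.image_symm, image_image]
  change _ * μ (Ioo (0 : ℝ) 1 • ((fun x : sphere (0 : E) 1 => A.symm x) '' s)) = _
  rw [← image_image A.symm, ← image2_smul,
    ← image_image2_distrib_right fun r v => map_smul A.symm r v, A.symm.image_eq_preimage_symm,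
    A.symm_symm, hA.measure_preimage_emb A.toHomeomorph.measurableEmbedding, image2_smul]

end UnitSphere

instance (d : ℕ) : Nonempty (Sphere d) :=
  (NormedSpace.sphere_nonempty.2 zero_le_one).to_subtype

instance (d : ℕ) : IsProbabilityMeasure (sphereMeasure d) := by
  have : NeZero (volume : Measure (EuclideanSpace ℝ (Fin (d + 1)))).toSphere :=
    ⟨Measure.toSphere_ne_zero _⟩
  unfold sphereMeasure
  infer_instance

lemma measurePreserving_unitSphereHomeomorph_sphereMeasure (d : ℕ)
    (A : EuclideanSpace ℝ (Fin (d + 1)) ≃ₗᵢ[ℝ] EuclideanSpace ℝ (Fin (d + 1))) :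
    MeasurePreserving A.unitSphereHomeomorph (sphereMeasure d) (sphereMeasure d) :=
  ⟨A.unitSphereHomeomorph.continuous.measurable, by
    rw [sphereMeasure, Measure.map_smul,
      Measure.map_toSphere_unitSphereHomeomorph A.measurePreserving]⟩

lemma integral_comp_ip_eq {d : ℕ} (q : ℝ → ℝ) (x y : Sphere d) :
    ∫ w, q (ip x w) ∂(sphereMeasure d) = ∫ w, q (ip y w) ∂(sphereMeasure d) := by
  have hxy := (norm_eq_of_mem_sphere x).trans (norm_eq_of_mem_sphere y).symm
  set A := Submodule.reflection (ℝ ∙ ((x : EuclideanSpace ℝ (Fin (d + 1))) - y))ᗮ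
  have hA : ∀ w, ip y (A.unitSphereHomeomorph w) = ip x w := fun w => by
    rw [ip, LinearIsometryEquiv.coe_unitSphereHomeomorph, ← Submodule.reflection_sub hxy,
      LinearIsometryEquiv.inner_map_map, ip]
  simp_rw [← hA]
  exact (measurePreserving_unitSphereHomeomorph_sphereMeasure d A).integral_comp
    A.unitSphereHomeomorph.measurableEmbedding (fun w => q (ip y w))

lemma isSymmetricL2Kernel_sphere {d : ℕ} {f : ℝ → ℝ} (hf : Measurable f)
    (hf2 : ∀ x : Sphere d, Integrable (fun w => f (ip x w) ^ 2) (sphereMeasure d)) :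
    IsSymmetricL2Kernel (sphereMeasure d) fun x w => f (ip x w) where
  measurable := hf.comp <| (continuous_subtype_val.comp continuous_fst).inner
    (continuous_subtype_val.comp continuous_snd) |>.measurable
  symm x y := by rw [ip, real_inner_comm, ip]
  integrable_sq := hf2
  bddAbove_integral_sq := ⟨_, forall_mem_range.2 fun x =>
    (integral_comp_ip_eq (f · ^ 2) x (Classical.arbitrary _)).le⟩

theorem generalized_stolarsky_general (d : ℕ) (f F : ℝ → ℝ) (hf : Measurable f)
    (hf2 : ∀ x : Sphere d, Integrable (fun w => f (ip x w) ^ 2) (sphereMeasure d))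
    (hF : ∀ x y : Sphere d, F (ip x y) = ∫ w, f (ip x w) * f (ip w y) ∂(sphereMeasure d))
    (μ : Measure (Sphere d)) [IsProbabilityMeasure μ]
    (N : ℕ) (hN : 1 ≤ N) (z : Fin N → Sphere d) :
    ((∫ x, ∫ y, F (ip x y) ∂μ ∂μ)
        - (∫ x, ∫ y, F (ip x y) ∂(sphereMeasure d) ∂(sphereMeasure d))
      = ∫ x, |(∫ y, f (ip x y) ∂μ) - ∫ y, f (ip x y) ∂(sphereMeasure d)| ^ 2 ∂(sphereMeasure d))
    ∧ ((1 / (N : ℝ) ^ 2) * (∑ i, ∑ j, F (ip (z i) (z j)))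
        - (∫ x, ∫ y, F (ip x y) ∂(sphereMeasure d) ∂(sphereMeasure d))
      = ∫ x, |(1 / (N : ℝ)) * (∑ i, f (ip x (z i)))
          - ∫ y, f (ip x y) ∂(sphereMeasure d)| ^ 2 ∂(sphereMeasure d)) := by
  have hk := isSymmetricL2Kernel_sphere hf hf2
  have stolarsky (ν : Measure (Sphere d)) [IsProbabilityMeasure ν] :=
    hk.kernelEnergy_sub_kernelEnergy (μ := ν) (K := fun x y => F (ip x y)) hF
      fun x => integral_comp_ip_eq f x (Classical.arbitrary _)
  have : Nonempty (Fin N) := ⟨⟨0, hN⟩⟩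
  refine ⟨stolarsky μ, ?_⟩
  have h := stolarsky (empiricalMeasure z)
  rw [kernelEnergy_empiricalMeasure] at h
  simpa only [kernelEnergy, kernelPotential, integral_empiricalMeasure, Fintype.card_fin, one_div]
    using h

/-- **Generalized Stolarsky principle**: if `F(x·y) = ∫ f(x·z) f(z·y) dσ(z)` for a Borel
function `f` which is square-integrable on the sphere in each variable, then for every Borel
probability measure `μ`, `I_F(μ) - I_F(σ)` equals the squared `L²(σ)` discrepancy of `μ` with
respect to `f`; in particular this holds for the counting measure of a point configuration. -/
theorem generalized_stolarsky (d : ℕ) (hd : 1 ≤ d) (f F : ℝ → ℝ) (hf : Measurable f)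
    (hf2 : ∀ x : Sphere d, Integrable (fun w => f (ip x w) ^ 2) (sphereMeasure d))
    (hF : ∀ x y : Sphere d, F (ip x y) = ∫ w, f (ip x w) * f (ip w y) ∂(sphereMeasure d))
    (μ : Measure (Sphere d)) [IsProbabilityMeasure μ]
    (N : ℕ) (hN : 1 ≤ N) (z : Fin N → Sphere d) :
    ((∫ x, ∫ y, F (ip x y) ∂μ ∂μ)
        - (∫ x, ∫ y, F (ip x y) ∂(sphereMeasure d) ∂(sphereMeasure d))
      = ∫ x, |(∫ y, f (ip x y) ∂μ) - ∫ y, f (ip x y) ∂(sphereMeasure d)| ^ 2 ∂(sphereMeasure d))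
    ∧ ((1 / (N : ℝ) ^ 2) * (∑ i, ∑ j, F (ip (z i) (z j)))
        - (∫ x, ∫ y, F (ip x y) ∂(sphereMeasure d) ∂(sphereMeasure d))
      = ∫ x, |(1 / (N : ℝ)) * (∑ i, f (ip x (z i)))
          - ∫ y, f (ip x y) ∂(sphereMeasure d)| ^ 2 ∂(sphereMeasure d)) :=
  generalized_stolarsky_general d f F hf hf2 hF μ N hN z
end
end
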